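/- arXiv:1310.1775 — 6 statements merged into one kernel-verified Lean document; each statement's English description precedes it below -/
import Mathlib

section
/- Let G be a finite non-cyclic group. Then σ(G) ≥ μ(G) + 1, where σ(G) is the covering number of G and μ(G) is the least integer k such that G has more than one maximal subgroup of index k. -/
open scoped Pointwise

/-- The normal covering number `γ(G)`: the smallest `k` such that there are `k` proper
subgroups of `G` whose conjugates cover `G`; it is `⊤` (infinity) if no such `k` exists
(e.g. when `G` is cyclic). -/
noncomputable def normalCoveringNumber (G : Type*) [Group G] : ℕ∞ :=
  sInf {n : ℕ∞ | ∃ k : ℕ, n = (k : ℕ∞) ∧ ∃ H : Fin k → Subgroup G,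
    (∀ i, H i ≠ ⊤) ∧ ∀ g : G, ∃ i, ∃ x : G, x * g * x⁻¹ ∈ H i}

/-- The covering number `σ(G)`: the smallest number of proper subgroups of `G` whose
union is `G`; it is `⊤` (infinity) if no such number exists (e.g. when `G` is cyclic). -/
noncomputable def coveringNumber (G : Type*) [Group G] : ℕ∞ :=
  sInf {n : ℕ∞ | ∃ k : ℕ, n = (k : ℕ∞) ∧ ∃ H : Fin k → Subgroup G,
    (∀ i, H i ≠ ⊤) ∧ ∀ g : G, ∃ i, g ∈ H i}

/-- `μ(G)`: the least integer `k` such that `G` has more than one maximal subgroup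
of index `k`. -/
noncomputable def muIndex (G : Type*) [Group G] : ℕ :=
  sInf {k : ℕ | ∃ H K : Subgroup G, IsCoatom H ∧ IsCoatom K ∧ H ≠ K ∧
    H.index = k ∧ K.index = k}

/-- `m(S)`: the smallest index of a proper subgroup of `S`. -/
noncomputable def minIndex (S : Type*) [Group S] : ℕ :=
  sInf {n : ℕ | ∃ H : Subgroup S, H ≠ ⊤ ∧ H.index = n}

/-!
Enlarge each subgroup of a cover to a maximal one, and let `𝓝` be the members of index `< μ(G)`.
A maximal subgroup of index `< μ(G)` is normal (its conjugates are maximal of the same index),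
hence of prime index, and distinct members of `𝓝` have distinct prime indices.

All counting is by density: if a set `X` has density `≥ δ` in `G` and meets each remaining
member `M` of the cover in at most `δ |M|` elements, then `|G| ≤ ∑ |M| ≤ (#remaining) |G| / μ(G)`.
If `𝓝` is empty, take `X = G ∖ M₀` for one member `M₀`. Otherwise let `D = ⋂ 𝓝` and `m` the
product of the indices in `𝓝`; since these are coprime, some coset `g D` avoids every member of `𝓝`,
and `m` divides `|M : M ∩ D|` for every other maximal `M`, so `X = g D` works with `δ = 1 / m`.
Either way at least one member is discarded, giving `μ(G) + 1` members.
-/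

open Function Subgroup Finset

theorem Nat.prod_dvd_of_pairwise_coprime {ι : Type*} {s : Finset ι} {f : ι → ℕ} {n : ℕ}
    (hcop : (s : Set ι).Pairwise (Nat.Coprime on f)) (hdvd : ∀ i ∈ s, f i ∣ n) :
    ∏ i ∈ s, f i ∣ n := by
  rw [← Int.natCast_dvd_natCast, Nat.cast_prod]
  exact Finset.prod_dvd_of_coprime
    (fun i hi j hj hij => Nat.isCoprime_iff_coprime.mpr (hcop hi hj hij))
    fun i hi => Int.natCast_dvd_natCast.mpr (hdvd i hi)

namespace Subgroup

variable {G : Type*} [Group G]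

theorem card_inf_mul_relIndex (H K : Subgroup G) :
    Nat.card ↥(H ⊓ K) * H.relIndex K = Nat.card K := by
  rw [← inf_relIndex_right, ← relIndex_bot_left, ← relIndex_bot_left,
    relIndex_mul_relIndex _ _ _ bot_le inf_le_right]

theorem relIndex_eq_index_of_isCoatom {M N : Subgroup G} [N.Normal] (hM : IsCoatom M)
    (hN : IsCoatom N) (hMN : M ≠ N) : N.relIndex M = N.index := by
  have hsup : M ⊔ N = ⊤ := hM.2 _ <| lt_of_le_of_ne le_sup_left fun h =>
    hMN (hN.le_iff.mp (h ▸ le_sup_right) |>.resolve_left hM.1)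
  rw [← relIndex_sup_right, hsup, relIndex_top_right]

theorem index_prime_of_isCoatom {N : Subgroup G} [N.Normal] [N.FiniteIndex] (hN : IsCoatom N) :
    N.index.Prime := by
  obtain ⟨p, hp, hpN⟩ := Nat.exists_prime_and_dvd (mt index_eq_one.mp hN.1)
  have := Fact.mk hp
  rw [index_eq_card] at hpN ⊢
  obtain ⟨x, hx⟩ := exists_prime_orderOf_dvd_card' p hpN
  have e : Subgroup (G ⧸ N) ≃o Set.Ici N := QuotientGroup.comapMk'OrderIso N
  have : IsSimpleOrder (Subgroup (G ⧸ N)) :=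
    e.isSimpleOrder_iff.mpr (Set.isSimpleOrder_Ici_iff_isCoatom.mpr hN)
  have hx1 : x ≠ 1 := by rintro rfl; exact hp.one_lt.ne (by simpa using hx)
  have htop : zpowers x = ⊤ :=
    (IsSimpleOrder.eq_bot_or_eq_top _).resolve_left (zpowers_ne_bot.mpr hx1)
  rwa [← card_top, ← htop, Nat.card_zpowers, hx]

theorem index_finset_inf_dvd_prod (s : Finset (Subgroup G)) (hs : ∀ N ∈ s, N.Normal) :
    (s.inf id).index ∣ ∏ N ∈ s, N.index := by
  classical
  induction s using Finset.induction_on with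
  | empty => simp
  | insert N s hNs ih =>
    have := hs N (mem_insert_self N s)
    rw [inf_insert, prod_insert hNs, id, ← relIndex_mul_index inf_le_right, inf_relIndex_right]
    exact mul_dvd_mul (relIndex_dvd_index_of_normal N _)
      (ih fun K hK => hs K (mem_insert_of_mem hK))

theorem exists_forall_notMem_of_pairwise_coprime (s : Finset (Subgroup G))
    (hs : ∀ N ∈ s, N.Normal) (hs_ne : ∀ N ∈ s, N ≠ ⊤)
    (hcop : (s : Set (Subgroup G)).Pairwise (Nat.Coprime on index)) :
    ∃ g : G, ∀ N ∈ s, g ∉ N := by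
  classical
  induction s using Finset.induction_on with
  | empty => exact ⟨1, by simp⟩
  | insert N s hNs ih =>
    rw [coe_insert] at hcop
    simp only [mem_insert, forall_eq_or_imp] at hs hs_ne ⊢
    obtain ⟨g, hg⟩ := ih hs.2 hs_ne.2 (hcop.mono (Set.subset_insert _ _))
    by_cases hgN : g ∈ N
    · -- `|G : N|` is coprime to the indices of the other members, so their meet is not in `N`
      have hD : ¬ s.inf id ≤ N := fun hle => hs_ne.1 <| index_eq_one.mp <|
        (Nat.Coprime.prod_right fun K hK => hcop (Set.mem_insert _ _) (Set.mem_insert_of_mem _ hK)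
          (ne_of_mem_of_not_mem hK hNs).symm).eq_one_of_dvd
          ((index_dvd_of_le hle).trans (index_finset_inf_dvd_prod s hs.2))
      obtain ⟨d, hd, hdN⟩ := SetLike.not_le_iff_exists.mp hD
      refine ⟨g * d, (mul_mem_cancel_left hgN).not.mpr hdN, fun K hK => ?_⟩
      exact (mul_mem_cancel_right ((Finset.inf_le hK : s.inf id ≤ K) hd)).not.mpr (hg K hK)
    · exact ⟨g, hgN, hg⟩

theorem ncard_smul_inter_le [Finite G] (g : G) (D M : Subgroup G) :
    (g • (D : Set G) ∩ M).ncard ≤ Nat.card ↥(D ⊓ M) := by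
  rcases (g • (D : Set G) ∩ M).eq_empty_or_nonempty with h | ⟨x, hxD, hxM⟩
  · simp [h]
  calc (g • (D : Set G) ∩ M).ncard ≤ (x • ((D ⊓ M : Subgroup G) : Set G)).ncard := by
        refine Set.ncard_le_ncard fun y ⟨hyD, hyM⟩ =>
          Set.mem_smul_set_iff_inv_smul_mem.mpr ⟨?_, ?_⟩
        · simp only [Set.mem_smul_set_iff_inv_smul_mem, SetLike.mem_coe, smul_eq_mul] at hxD hyD
          simpa [mul_assoc] using mul_mem (inv_mem hxD) hyD
        · exact M.mul_mem (M.inv_mem hxM) hyM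
    _ = Nat.card ↥(D ⊓ M) := by rw [Set.ncard_smul_set, ← Nat.card_coe_set_eq, SetLike.coe_sort_coe]

end Subgroup

section

variable {G : Type*} [Group G]

theorem muIndex_le_index {H K : Subgroup G} (hH : IsCoatom H) (hK : IsCoatom K) (hne : H ≠ K)
    (hidx : H.index = K.index) : muIndex G ≤ K.index :=
  Nat.sInf_le ⟨H, K, hH, hK, hne, hidx, rfl⟩

theorem Subgroup.normal_of_index_lt_muIndex {H : Subgroup G} (hH : IsCoatom H)
    (hlt : H.index < muIndex G) : H.Normal := by
  refine Normal.of_conjugate_fixed fun g => ?_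
  by_contra hne
  have hconj : IsCoatom (MulAut.conj g • H) := by
    rw [pointwise_smul_def]
    exact ((MulAut.conj g).mapSubgroup.isCoatom_iff H).mpr hH
  refine hlt.not_ge (muIndex_le_index hconj hH hne ?_)
  rw [pointwise_smul_def]
  exact index_map_equiv _ (MulAut.conj g)

variable [Finite G]

theorem card_le_sum_card_of_subset_biUnion {X : Set G} {𝓐 : Finset (Subgroup G)} {a b : ℕ}
    (hb : 0 < b) (hX : X ⊆ ⋃ M ∈ 𝓐, (M : Set G)) (hXcard : b * Nat.card G ≤ a * X.ncard)
    (hM : ∀ M ∈ 𝓐, a * (X ∩ M).ncard ≤ b * Nat.card M) :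
    Nat.card G ≤ ∑ M ∈ 𝓐, Nat.card M := by
  have hXM : X.ncard ≤ ∑ M ∈ 𝓐, (X ∩ M).ncard :=
    calc X.ncard ≤ (⋃ M ∈ 𝓐, X ∩ M).ncard := by
          rw [← Set.inter_iUnion₂]
          exact Set.ncard_le_ncard (Set.subset_inter subset_rfl hX)
      _ ≤ ∑ M ∈ 𝓐, (X ∩ M).ncard := Finset.set_ncard_biUnion_le _ _
  refine le_of_mul_le_mul_left ?_ hb
  calc b * Nat.card G ≤ a * ∑ M ∈ 𝓐, (X ∩ M).ncard := hXcard.trans (by gcongr)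
    _ ≤ b * ∑ M ∈ 𝓐, Nat.card M := by
      rw [mul_sum, mul_sum]
      exact sum_le_sum hM

theorem le_card_of_card_le_sum_card {𝓐 : Finset (Subgroup G)} {k : ℕ}
    (hk : ∀ M ∈ 𝓐, k ≤ M.index) (hsum : Nat.card G ≤ ∑ M ∈ 𝓐, Nat.card M) : k ≤ #𝓐 := by
  refine le_of_mul_le_mul_right ?_ (Nat.card_pos (α := G))
  calc k * Nat.card G ≤ ∑ M ∈ 𝓐, k * Nat.card M := by rw [← mul_sum]; gcongr
    _ ≤ ∑ M ∈ 𝓐, Nat.card G := sum_le_sum fun M hM => by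
      rw [← card_mul_index M, mul_comm]
      gcongr
      exact hk M hM
    _ = #𝓐 * Nat.card G := by rw [sum_const, smul_eq_mul]

theorem add_one_le_card_of_covers_of_le_index {𝓜 : Finset (Subgroup G)} {k : ℕ}
    (hcov : ∀ g : G, ∃ M ∈ 𝓜, g ∈ M) (hne : ∀ M ∈ 𝓜, M ≠ ⊤) (hk : ∀ M ∈ 𝓜, k ≤ M.index) :
    k + 1 ≤ #𝓜 := by
  classical
  obtain ⟨M₀, hM₀, -⟩ := hcov 1
  have hM₀_index := one_lt_index_of_ne_top (hne M₀ hM₀)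
  obtain ⟨b, hb⟩ : ∃ b, M₀.index = b + 1 := Nat.exists_eq_add_one.mpr (zero_lt_one.trans hM₀_index)
  suffices k ≤ #(𝓜.erase M₀) by
    rw [card_erase_of_mem hM₀] at this
    have := card_pos.mpr ⟨M₀, hM₀⟩
    omega
  -- `M₀ᶜ` has density `b / (b + 1)`, and at most that inside any `M`, as `|M ∩ M₀| ≥ |M| / (b + 1)`
  refine le_card_of_card_le_sum_card (fun M hM => hk M (mem_of_mem_erase hM)) <|
    card_le_sum_card_of_subset_biUnion (X := (M₀ : Set G)ᶜ) (a := b + 1) (b := b) (by omega)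
      ?_ ?_ ?_
  · intro x hx
    obtain ⟨M, hM, hxM⟩ := hcov x
    exact Set.mem_biUnion (mem_erase.mpr ⟨fun h => hx (h ▸ hxM), hM⟩) hxM
  · have h1 := Set.ncard_compl_add_ncard (M₀ : Set G)
    have h2 := card_mul_index M₀
    rw [hb, ← SetLike.coe_sort_coe, Nat.card_coe_set_eq] at h2
    nlinarith
  · intro M _
    have h1 := Set.ncard_inter_add_ncard_sdiff_eq_ncard (M : Set G) M₀
    have h2 := card_inf_mul_relIndex M₀ M
    have h3 : M₀.relIndex M ≤ b + 1 := by
      have := relIndex_le_of_le_right (le_top : M ≤ ⊤) (H := M₀)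
        (by rw [relIndex_top_right]; exact index_ne_zero_of_finite)
      rwa [relIndex_top_right, hb] at this
    have hM : Nat.card M = (M : Set G).ncard := by
      rw [← Nat.card_coe_set_eq, SetLike.coe_sort_coe]
    have hMM₀ : Nat.card ↥(M₀ ⊓ M) = (M ∩ M₀ : Set G).ncard := by
      rw [← Nat.card_coe_set_eq, Set.inter_comm, ← coe_inf, SetLike.coe_sort_coe]
    rw [Set.inter_comm, ← Set.sdiff_eq]
    nlinarith [Nat.mul_le_mul_left (Nat.card ↥(M₀ ⊓ M)) h3]

theorem add_one_le_card_of_covers_of_pairwise_coprime {𝓜 𝓝 : Finset (Subgroup G)} {k : ℕ}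
    (hcov : ∀ g : G, ∃ M ∈ 𝓜, g ∈ M) (hmax : ∀ M ∈ 𝓜, IsCoatom M) (h𝓝 : 𝓝 ⊆ 𝓜)
    (h𝓝_nonempty : 𝓝.Nonempty) (hnormal : ∀ N ∈ 𝓝, N.Normal)
    (hcop : (𝓝 : Set (Subgroup G)).Pairwise (Nat.Coprime on index))
    (hk : ∀ M ∈ 𝓜, M ∉ 𝓝 → k ≤ M.index) : k + 1 ≤ #𝓜 := by
  classical
  obtain ⟨g, hg⟩ := exists_forall_notMem_of_pairwise_coprime 𝓝 hnormal
    (fun N hN => (hmax N (h𝓝 hN)).1) hcop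
  set D := 𝓝.inf id
  set m := ∏ N ∈ 𝓝, N.index
  have hm : 0 < m := prod_pos fun N _ => Nat.pos_of_ne_zero index_ne_zero_of_finite
  suffices k ≤ #(𝓜 \ 𝓝) by
    rw [card_sdiff_of_subset h𝓝] at this
    have := card_le_card h𝓝
    have := h𝓝_nonempty.card_pos
    omega
  refine le_card_of_card_le_sum_card (fun M hM => hk M (mem_sdiff.mp hM).1 (mem_sdiff.mp hM).2) <|
    card_le_sum_card_of_subset_biUnion (X := g • (D : Set G)) (a := m) one_pos ?_ ?_ ?_
  · rintro _ ⟨d, hd, rfl⟩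
    obtain ⟨M, hM, hgdM⟩ := hcov (g • d)
    refine Set.mem_biUnion (mem_sdiff.mpr ⟨hM, fun hM𝓝 => hg M hM𝓝 ?_⟩) hgdM
    exact (mul_mem_cancel_right ((inf_le hM𝓝 : D ≤ M) hd)).mp hgdM
  · rw [one_mul, Set.ncard_smul_set, ← Nat.card_coe_set_eq, SetLike.coe_sort_coe,
      ← card_mul_index D, mul_comm]
    gcongr
    exact Nat.le_of_dvd hm (index_finset_inf_dvd_prod 𝓝 hnormal)
  · intro M hM
    obtain ⟨hM𝓜, hM𝓝⟩ := mem_sdiff.mp hM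
    have hdvd : m ∣ D.relIndex M := Nat.prod_dvd_of_pairwise_coprime hcop fun N hN => by
      have := hnormal N hN
      rw [← relIndex_eq_index_of_isCoatom (hmax M hM𝓜) (hmax N (h𝓝 hN))
        (ne_of_mem_of_not_mem hN hM𝓝).symm]
      exact relIndex_dvd_of_le_left M (inf_le hN)
    have hD_relIndex : 0 < D.relIndex M :=
      Nat.pos_of_ne_zero (isFiniteRelIndex_of_finiteIndex (H := D) (K := M)).relIndex_ne_zero
    calc m * (g • (D : Set G) ∩ M).ncard ≤ D.relIndex M * Nat.card ↥(D ⊓ M) :=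
          Nat.mul_le_mul (Nat.le_of_dvd hD_relIndex hdvd) (ncard_smul_inter_le g D M)
      _ = 1 * Nat.card M := by rw [one_mul, mul_comm, card_inf_mul_relIndex]

theorem muIndex_add_one_le_card_of_covers {𝓜 : Finset (Subgroup G)}
    (hmax : ∀ M ∈ 𝓜, IsCoatom M) (hcov : ∀ g : G, ∃ M ∈ 𝓜, g ∈ M) : muIndex G + 1 ≤ #𝓜 := by
  classical
  set 𝓝 := {M ∈ 𝓜 | M.index < muIndex G}
  have hk : ∀ M ∈ 𝓜, M ∉ 𝓝 → muIndex G ≤ M.index := fun M hM hM𝓝 =>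
    not_lt.mp fun h => hM𝓝 (mem_filter.mpr ⟨hM, h⟩)
  have hsmall : ∀ N ∈ 𝓝, IsCoatom N ∧ N.index < muIndex G := fun N hN =>
    ⟨hmax N (mem_filter.mp hN).1, (mem_filter.mp hN).2⟩
  have hnormal : ∀ N ∈ 𝓝, N.Normal := fun N hN =>
    normal_of_index_lt_muIndex (hsmall N hN).1 (hsmall N hN).2
  rcases 𝓝.eq_empty_or_nonempty with h | h
  · exact add_one_le_card_of_covers_of_le_index hcov (fun M hM => (hmax M hM).1)
      fun M hM => hk M hM (h ▸ notMem_empty M)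
  refine add_one_le_card_of_covers_of_pairwise_coprime hcov hmax (filter_subset _ _) h hnormal
    ?_ hk
  intro N hN K hK hNK
  have := hnormal N hN
  have := hnormal K hK
  exact (Nat.coprime_primes (index_prime_of_isCoatom (hsmall N hN).1)
    (index_prime_of_isCoatom (hsmall K hK).1)).mpr fun heq =>
      (muIndex_le_index (hsmall N hN).1 (hsmall K hK).1 hNK heq).not_gt (hsmall K hK).2

end

theorem sigma_ge_mu_add_one_general (G : Type*) [Group G] [Finite G] :
    (muIndex G : ℕ∞) + 1 ≤ coveringNumber G := by
  classical
  refine le_sInf ?_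
  rintro _ ⟨k, rfl, H, hproper, hcov⟩
  choose M hM hHM using fun i => (eq_top_or_exists_le_coatom (H i)).resolve_left (hproper i)
  have : muIndex G + 1 ≤ k :=
    calc muIndex G + 1 ≤ #(univ.image M) := muIndex_add_one_le_card_of_covers (by simpa using hM)
          fun g => let ⟨i, hi⟩ := hcov g; ⟨M i, mem_image_of_mem M (mem_univ i), hHM i hi⟩
      _ ≤ k := card_image_le.trans (by simp)
  exact_mod_cast this

/-- Cohn: for a finite non-cyclic group, `σ(G) ≥ μ(G) + 1`. -/
theorem sigma_ge_mu_add_one (G : Type*) [Group G] [Finite G] (hG : ¬ IsCyclic G) :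
    (muIndex G : ℕ∞) + 1 ≤ coveringNumber G :=
  sigma_ge_mu_add_one_general G
end

section
/- Let G be a finite soluble non-cyclic group such that G/G′ is cyclic, where G′ is the commutator subgroup of G. Then γ(G) = 2. -/
open scoped Pointwise

/-!
The lower bound holds for every finite group: by Burnside's lemma a transitive action of a finite
group on at least two points has a fixed-point-free element, so no single proper subgroup meets
every conjugacy class.

For the upper bound induct on `|G|` using a minimal normal subgroup `V`, abelian because `G` is
soluble. If `G/V` is not cyclic, two subgroups for `G/V` pull back to `G`. If `G/V = ⟨xV⟩`, take
`⟨x⟩` and `C_G(V)`, both proper since `G` is not abelian (an abelian `G` would be `G/G'`, hence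
cyclic). An element outside `C_G(V)` has the form `v y` with `v ∈ V`, `y ∈ ⟨x⟩` and
`y ∉ C_G(V)`; then `C_V(y)` is a normal subgroup of `G` properly contained in `V`, hence trivial,
so `w ↦ w y w⁻¹ y⁻¹` is a bijection of `V` and `v y` is conjugate to `y`.
-/

open Subgroup

theorem MulAction.exists_forall_smul_ne {G α : Type*} [Group G] [MulAction G α] [Finite G]
    [Finite α] [IsPretransitive G α] (hα : 1 < Nat.card α) : ∃ g : G, ∀ a : α, g • a ≠ a := by
  classical
  by_contra! hfix
  have := Fintype.ofFinite G
  have := Fintype.ofFinite α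
  have : Unique (orbitRel.Quotient G α) :=
    have := (pretransitive_iff_subsingleton_quotient G α).mp ‹_›
    uniqueOfSubsingleton (Quotient.mk _ (hfix 1).choose)
  have hburnside := sum_card_fixedBy_eq_card_orbits_mul_card_group G α
  rw [Fintype.card_unique, one_mul] at hburnside
  have hsum : ∑ _g : G, 1 < ∑ g : G, Fintype.card (fixedBy α g) := by
    refine Finset.sum_lt_sum (fun g _ ↦ ?_) ⟨1, Finset.mem_univ _, ?_⟩
    · obtain ⟨a, ha⟩ := hfix g
      exact Fintype.card_pos_iff.mpr ⟨⟨a, ha⟩⟩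
    · simpa [Fintype.card_congr (Equiv.subtypeUnivEquiv (fun a : α ↦ one_smul G a)),
        ← Nat.card_eq_fintype_card] using hα
  rw [hburnside, Finset.sum_const, smul_eq_mul, mul_one, Finset.card_univ] at hsum
  exact lt_irrefl _ hsum

theorem Subgroup.exists_forall_conj_notMem {G : Type*} [Group G] [Finite G] {H : Subgroup G}
    (hH : H ≠ ⊤) : ∃ g : G, ∀ x : G, x * g * x⁻¹ ∉ H := by
  obtain ⟨g, hg⟩ := MulAction.exists_forall_smul_ne (G := G) (α := G ⧸ H)
    (H.index_eq_card ▸ H.one_lt_index_of_ne_top hH)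
  refine ⟨g, fun x hx ↦ hg (x⁻¹ : G) (Eq.symm ?_)⟩
  rw [MulAction.Quotient.smul_coe, QuotientGroup.eq]
  simpa [mul_assoc] using hx

theorem two_le_normalCoveringNumber (G : Type*) [Group G] [Finite G] :
    2 ≤ normalCoveringNumber G := by
  refine le_sInf ?_
  rintro _ ⟨k, rfl, H, hH, hcover⟩
  suffices 2 ≤ k by exact_mod_cast this
  rcases k with _ | _ | k
  · obtain ⟨i, -⟩ := hcover 1
    exact i.elim0
  · obtain ⟨g, hg⟩ := exists_forall_conj_notMem (hH 0)
    obtain ⟨i, x, hx⟩ := hcover g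
    exact (hg x (Fin.fin_one_eq_zero i ▸ hx)).elim
  · omega

section

variable {G : Type*} [Group G]

def IsNormalCoveringPair (H K : Subgroup G) : Prop :=
  H ≠ ⊤ ∧ K ≠ ⊤ ∧ ∀ g : G, ∃ x : G, x * g * x⁻¹ ∈ H ∨ x * g * x⁻¹ ∈ K

theorem IsNormalCoveringPair.normalCoveringNumber_le_two {H K : Subgroup G}
    (h : IsNormalCoveringPair H K) : normalCoveringNumber G ≤ 2 := by
  obtain ⟨hH, hK, hcover⟩ := h
  refine sInf_le ⟨2, rfl, ![H, K], fun i ↦ by fin_cases i <;> assumption, fun g ↦ ?_⟩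
  obtain ⟨x, hx | hx⟩ := hcover g
  exacts [⟨0, x, hx⟩, ⟨1, x, hx⟩]

theorem IsNormalCoveringPair.comap {Q : Type*} [Group Q] {f : G →* Q}
    (hf : Function.Surjective f) {H K : Subgroup Q} (h : IsNormalCoveringPair H K) :
    IsNormalCoveringPair (H.comap f) (K.comap f) := by
  obtain ⟨hH, hK, hcover⟩ := h
  have comap_ne_top {L : Subgroup Q} (hL : L ≠ ⊤) : L.comap f ≠ ⊤ := by
    rwa [← comap_top f, (comap_injective hf).ne_iff]
  refine ⟨comap_ne_top hH, comap_ne_top hK, fun g ↦ ?_⟩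
  obtain ⟨y, hy⟩ := hcover (f g)
  obtain ⟨x, rfl⟩ := hf y
  exact ⟨x, by simpa using hy⟩

theorem Subgroup.isMulCommutative_of_minimal_normal [Group.IsSolvable G] {V : Subgroup G}
    [V.Normal] (hmin : ∀ N : Subgroup G, N.Normal → N < V → N = ⊥) : IsMulCommutative V := by
  rw [← le_centralizer_iff_isMulCommutative, ← commutator_eq_bot_iff_le_centralizer]
  by_cases hV : V = ⊥
  · exact le_bot_iff.mp (hV ▸ commutator_le_left V V)
  · exact hmin _ inferInstance (Group.IsSolvable.commutator_lt_of_ne_bot hV)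

theorem Subgroup.exists_minimal_normal [Finite G] [Nontrivial G] :
    ∃ V : Subgroup G, V.Normal ∧ V ≠ ⊥ ∧ ∀ N : Subgroup G, N.Normal → N < V → N = ⊥ := by
  obtain ⟨V, ⟨hV, hV_ne⟩, hmin⟩ := wellFounded_lt.has_min {N : Subgroup G | N.Normal ∧ N ≠ ⊥}
    ⟨⊤, inferInstance, top_ne_bot⟩
  exact ⟨V, hV, hV_ne, fun N hN hlt ↦ not_not.mp fun hN_ne ↦ hmin N ⟨hN, hN_ne⟩ hlt⟩

theorem Subgroup.exists_conj_eq_mul_of_inf_centralizer_eq_bot {V : Subgroup G} [V.Normal]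
    [Finite V] {y : G} (hy : V ⊓ centralizer {y} = ⊥) {v : G} (hv : v ∈ V) :
    ∃ w ∈ V, w * y * w⁻¹ = v * y := by
  let f : V → V := fun w ↦ ⟨w * (y * (w : G)⁻¹ * y⁻¹),
    V.mul_mem w.2 (Normal.conj_mem ‹_› _ (V.inv_mem w.2) y)⟩
  have hf : Function.Injective f := by
    intro w₁ w₂ h
    have hcomm : (w₂ : G)⁻¹ * w₁ ∈ V ⊓ centralizer {y} := by
      refine ⟨V.mul_mem (V.inv_mem w₂.2) w₁.2, mem_centralizer_singleton_iff.mpr ?_⟩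
      have hw : (w₁ : G) * (y * (w₁ : G)⁻¹ * y⁻¹) = w₂ * (y * (w₂ : G)⁻¹ * y⁻¹) :=
        congrArg Subtype.val h
      calc (w₂ : G)⁻¹ * w₁ * y = (w₂ : G)⁻¹ * (w₁ * (y * (w₁ : G)⁻¹ * y⁻¹)) * y * w₁ := by group
        _ = (w₂ : G)⁻¹ * (w₂ * (y * (w₂ : G)⁻¹ * y⁻¹)) * y * w₁ := by rw [hw]
        _ = y * ((w₂ : G)⁻¹ * w₁) := by group
    rw [hy, mem_bot, inv_mul_eq_one] at hcomm
    exact Subtype.ext hcomm.symm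
  obtain ⟨w, hfw⟩ := Finite.surjective_of_injective hf ⟨v, hv⟩
  refine ⟨w, w.2, ?_⟩
  have hw : (w : G) * (y * (w : G)⁻¹ * y⁻¹) = v := congrArg Subtype.val hfw
  rw [← hw]
  group

theorem Subgroup.normal_inf_centralizer {V H : Subgroup G} [V.Normal] [IsMulCommutative V]
    [IsMulCommutative H] (hVH : V ⊔ H = ⊤) {y : G} (hy : y ∈ H) :
    (V ⊓ centralizer {y}).Normal := by
  rw [← normalizer_eq_top_iff, ← top_le_iff, ← hVH, sup_le_iff]
  constructor
  · calc V ≤ centralizer V := le_centralizer V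
      _ ≤ centralizer (V ⊓ centralizer {y} : Subgroup G) := centralizer_le inf_le_left
      _ ≤ _ := centralizer_le_normalizer _
  · refine le_trans (le_inf le_normalizer_of_normal ?_) inf_normalizer_le_normalizer_inf
    calc H ≤ centralizer H := le_centralizer H
      _ ≤ centralizer {y} := centralizer_le (Set.singleton_subset_iff.mpr hy)
      _ ≤ _ := le_normalizer

theorem isMulCommutative_of_sup_eq_top {V H : Subgroup G} (hVH : V ⊔ H = ⊤)
    (hV : V ≤ centralizer V) (hH : H ≤ centralizer H) (hHV : H ≤ centralizer V) :
    IsMulCommutative G := by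
  rw [← center_eq_top_iff, eq_top_iff, ← centralizer_univ, ← coe_top, ← hVH]
  have hV' : V ⊔ H ≤ centralizer V := sup_le hV hHV
  have hH' : V ⊔ H ≤ centralizer H := sup_le (le_centralizer_iff.mp hHV) hH
  exact sup_le (le_centralizer_iff.mp hV') (le_centralizer_iff.mp hH')

theorem isCyclic_of_isCyclic_abelianization [IsMulCommutative G] [IsCyclic (Abelianization G)] :
    IsCyclic G :=
  isCyclic_of_injective Abelianization.of <| (MonoidHom.ker_eq_bot_iff _).mp <| by
    rw [Abelianization.ker_of, commutator_eq_bot]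

theorem Abelianization.map_surjective {H : Type*} [Group H] {f : G →* H}
    (hf : Function.Surjective f) : Function.Surjective (Abelianization.map f) := by
  intro y
  induction y using QuotientGroup.induction_on with | H h => ?_
  obtain ⟨g, rfl⟩ := hf h
  exact ⟨of g, map_of f g⟩

theorem Subgroup.exists_sup_zpowers_eq_top {V : Subgroup G} [V.Normal] [IsCyclic (G ⧸ V)] :
    ∃ x : G, V ⊔ zpowers x = ⊤ := by
  obtain ⟨ξ, hξ⟩ := IsCyclic.exists_generator (α := G ⧸ V)
  obtain ⟨x, rfl⟩ := QuotientGroup.mk'_surjective V ξ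
  refine ⟨x, ?_⟩
  rw [sup_comm, ← QuotientGroup.ker_mk' V, ← comap_map_eq, MonoidHom.map_zpowers,
    (eq_top_iff' _).mpr hξ, comap_top]

theorem isNormalCoveringPair_centralizer_of_minimal_normal [Finite G] {V H : Subgroup G}
    [V.Normal] [IsMulCommutative V] (hmin : ∀ N : Subgroup G, N.Normal → N < V → N = ⊥)
    [IsMulCommutative H] (hVH : V ⊔ H = ⊤) (hG : ¬IsMulCommutative G) :
    IsNormalCoveringPair H (centralizer V) := by
  refine ⟨fun hH ↦ hG ?_, fun hC ↦ hG ?_, fun g ↦ ?_⟩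
  · exact isMulCommutative_iff.mpr fun a b ↦
      setLike_mul_comm (hH ▸ mem_top a : a ∈ H) (hH ▸ mem_top b)
  · exact isMulCommutative_of_sup_eq_top hVH (le_centralizer V) (le_centralizer H) (hC ▸ le_top)
  by_cases hg : g ∈ centralizer V
  · exact ⟨1, Or.inr (by simpa using hg)⟩
  obtain ⟨v, hv, y, hy, rfl⟩ := mem_sup_of_normal_left.mp (hVH ▸ mem_top g)
  have hy_notMem : y ∉ centralizer V := fun hy' ↦ hg (mul_mem (le_centralizer V hv) hy')
  have hV_not_le : ¬V ≤ centralizer {y} := fun h ↦ hy_notMem <|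
    mem_centralizer_iff.mpr fun w hw ↦ mem_centralizer_singleton_iff.mp (h hw)
  have hCV : V ⊓ centralizer {y} = ⊥ :=
    hmin _ (normal_inf_centralizer hVH hy) (inf_lt_left.mpr hV_not_le)
  obtain ⟨w, -, hwy⟩ := exists_conj_eq_mul_of_inf_centralizer_eq_bot hCV hv
  refine ⟨w⁻¹, Or.inl ?_⟩
  rw [← hwy]
  group
  exact hy

end

theorem exists_isNormalCoveringPair_of_isSolvable (G : Type*) [Group G] [Finite G]
    [Group.IsSolvable G] (hG : ¬IsCyclic G) (hab : IsCyclic (Abelianization G)) :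
    ∃ H K : Subgroup G, IsNormalCoveringPair H K := by
  induction hn : Nat.card G using Nat.strong_induction_on generalizing G with
  | _ n ih =>
  have : Nontrivial G := not_subsingleton_iff_nontrivial.mp fun _ ↦ hG isCyclic_of_subsingleton
  obtain ⟨V, hV, hV_ne, hmin⟩ := exists_minimal_normal (G := G)
  by_cases hc : IsCyclic (G ⧸ V)
  · obtain ⟨x, hx⟩ := exists_sup_zpowers_eq_top (V := V)
    have := isMulCommutative_of_minimal_normal hmin
    exact ⟨_, _, isNormalCoveringPair_centralizer_of_minimal_normal hmin hx
      fun _ ↦ hG isCyclic_of_isCyclic_abelianization⟩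
  · have hcard : Nat.card (G ⧸ V) < n := by
      rw [← hn, card_eq_card_quotient_mul_card_subgroup V]
      exact lt_mul_of_one_lt_right Nat.card_pos ((one_lt_card_iff_ne_bot V).mpr hV_ne)
    have : IsCyclic (Abelianization (G ⧸ V)) :=
      isCyclic_of_surjective _ (Abelianization.map_surjective (QuotientGroup.mk'_surjective V))
    obtain ⟨H, K, h⟩ := ih _ hcard (G ⧸ V) hc this rfl
    exact ⟨_, _, h.comap (QuotientGroup.mk'_surjective V)⟩

/-- A finite soluble non-cyclic group `G` with `G/G'` cyclic satisfies `γ(G) = 2`. -/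
theorem gamma_eq_two_of_solvable (G : Type*) [Group G] [Finite G] [Group.IsSolvable G]
    (hG : ¬ IsCyclic G) (hab : IsCyclic (Abelianization G)) :
    normalCoveringNumber G = 2 := by
  obtain ⟨H, K, h⟩ := exists_isNormalCoveringPair_of_isSolvable G hG hab
  exact le_antisymm h.normalCoveringNumber_le_two (two_le_normalCoveringNumber G)
end

section
/- Let G be a finite group with γ(G) = 2 such that γ(G/N) > 2 for every non-trivial normal subgroup N of G, and suppose G is the union of the conjugates of two maximal subgroups H and K. Then either soc(G) is contained in H, or soc(G) is contained in K, or G is an almost simple group. -/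
/-!
Pick a minimal normal subgroup `S` contained in neither `H` nor `K`: if `N ≰ H` lies in `K` and
`M ≰ K` lies in `H`, then `n * m` is conjugate into neither, for `n ∈ N` and `m ∈ M` not
conjugate into `H` and `K` respectively. Such elements exist by Jordan's lemma (a proper subgroup
of a finite group misses a whole conjugacy class) applied in `N`, because `G = HN` makes every
conjugate of `n` into `H` an `N`-conjugate.

In the same way, `G = HS` with `S ≰ H` forces `K ∩ S ≠ 1` (an element of `S` not conjugate into
`H` is conjugate into `K ∩ S`), and symmetrically `H ∩ S ≠ 1`. This excludes `S` abelian and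
`C = C_G(S) ≠ 1`: both make `K ∩ S` normal in `G = KS` (resp. in `G = KC` when `C ≰ K`), hence
trivial, while `C ≤ H ∩ K` gives `γ(G/C) ≤ 2`.

For simplicity of `S`, let `T` be a minimal normal subgroup of `S`. Distinct `G`-conjugates of `T`
commute, so `S = T · C_S(T)`. For `L ∈ {H, K}`, either `(L ∩ S) · C_S(T) = S`, and then `L ∩ T` is
normal in `S`, hence trivial (`T ≤ L` would give `S ≤ L`); or Jordan's lemma in `S` yields
`a ∈ T` none of whose products `a * c`, `c ∈ C_S(T)`, is conjugate into `L`. Either way some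
`a ≠ 1` in `T` is not conjugate into `L`, so by the covering `H ∩ T` and `K ∩ T` are non-trivial
and the second case holds for both. If `T < S`, take such an `a ∈ T` for `H` and such a `b` for
`K` in a minimal normal subgroup `T' ≤ C_S(T)` of `S`: then `a * b = b * a` is conjugate into
neither `H` nor `K`.
-/

open scoped Pointwise

/-- `N` is a minimal normal subgroup of `G`. -/
def IsMinimalNormal {G : Type*} [Group G] (N : Subgroup G) : Prop :=
  N.Normal ∧ N ≠ ⊥ ∧ ∀ M : Subgroup G, M.Normal → M ≠ ⊥ → M ≤ N → M = N

/-- The socle of `G`: the subgroup generated by all minimal normal subgroups. -/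
noncomputable def socle (G : Type*) [Group G] : Subgroup G :=
  sSup {N : Subgroup G | IsMinimalNormal N}

/-- `G` is almost simple: it has a non-abelian simple normal subgroup with trivial
centralizer (equivalently `S ≤ G ≤ Aut(S)` for a non-abelian simple `S`). -/
def IsAlmostSimpleGroup (G : Type*) [Group G] : Prop :=
  ∃ S : Subgroup G, S.Normal ∧ IsSimpleGroup ↥S ∧
    (¬ ∀ a b : ↥S, a * b = b * a) ∧ Subgroup.centralizer (S : Set G) = ⊥

section

open Subgroup MulAction

variable {G : Type*} [Group G]

namespace Subgroup

/-- Jordan's lemma, by Burnside's lemma for the transitive action on `G ⧸ D`: otherwise every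
element fixes a coset and `1` fixes at least two, so the average number of fixed points would
exceed `1`. -/
theorem exists_forall_conj_notMem_s11 [Finite G] {D : Subgroup G} (hD : D ≠ ⊤) :
    ∃ g : G, ∀ x : G, x * g * x⁻¹ ∉ D := by
  classical
  have := Fintype.ofFinite G
  by_contra! h
  have hfix (g : G) : 1 ≤ Fintype.card (fixedBy (G ⧸ D) g) := by
    obtain ⟨x, hx⟩ := h g
    refine Fintype.card_pos_iff.mpr ⟨⟨((x⁻¹ : G) : G ⧸ D), ?_⟩⟩
    simpa [mem_fixedBy, QuotientGroup.eq, mul_assoc] using D.inv_mem hx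
  have hone : 1 < Fintype.card (fixedBy (G ⧸ D) (1 : G)) := by
    have := one_lt_index_of_ne_top hD
    rw [index, Nat.card_eq_fintype_card] at this
    simpa [fixedBy_one_eq_univ] using this
  have horb : Fintype.card (orbitRel.Quotient G (G ⧸ D)) = 1 :=
    Fintype.card_eq_one_iff_nonempty_unique.mpr
      ((pretransitive_iff_unique_quotient_of_nonempty G (G ⧸ D)).mp inferInstance)
  have hsum : ∑ _g : G, 1 < ∑ g : G, Fintype.card (fixedBy (G ⧸ D) g) :=
    Finset.sum_lt_sum (fun g _ => hfix g) ⟨1, Finset.mem_univ _, hone⟩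
  rw [sum_card_fixedBy_eq_card_orbits_mul_card_group, horb, one_mul] at hsum
  simp at hsum

theorem exists_mem_forall_conj_notMem [Finite G] {S U : Subgroup G} (h : ¬ S ≤ U) :
    ∃ t ∈ S, ∀ s ∈ S, s * t * s⁻¹ ∉ U := by
  obtain ⟨t, ht⟩ := exists_forall_conj_notMem_s11 (D := U.subgroupOf S) (mt subgroupOf_eq_top.mp h)
  exact ⟨t, t.2, fun s hs hsU => ht ⟨s, hs⟩ (by simpa [mem_subgroupOf] using hsU)⟩

theorem exists_mem_mul_eq_of_sup_eq_top {L S : Subgroup G} [S.Normal] (h : L ⊔ S = ⊤)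
    (g : G) : ∃ l ∈ L, ∃ s ∈ S, l * s = g := by
  have hg : g ∈ ((L ⊔ S : Subgroup G) : Set G) := by simp [h]
  rwa [mul_normal] at hg

theorem exists_mem_conj_mem_of_sup_eq_top {L S : Subgroup G} [S.Normal] (h : L ⊔ S = ⊤)
    {g x : G} (hx : x * g * x⁻¹ ∈ L) : ∃ s ∈ S, s * g * s⁻¹ ∈ L := by
  obtain ⟨l, hl, s, hs, rfl⟩ := exists_mem_mul_eq_of_sup_eq_top h x
  refine ⟨s, hs, ?_⟩
  rw [show s * g * s⁻¹ = l⁻¹ * (l * s * g * (l * s)⁻¹) * l by group]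
  exact mul_mem (mul_mem (inv_mem hl) hx) hl

theorem exists_mem_forall_conj_mul_notMem [Finite G] {L S C : Subgroup G} [S.Normal]
    (hLS : L ⊔ S = ⊤) (hCS : C ≤ S) (hSC : S ≤ normalizer (C : Set G))
    (h : ¬ S ≤ (L ⊓ S) ⊔ C) : ∃ t ∈ S, ∀ c ∈ C, ∀ x : G, x * (t * c) * x⁻¹ ∉ L := by
  obtain ⟨t, htS, ht⟩ := exists_mem_forall_conj_notMem h
  refine ⟨t, htS, fun c hc x hx => ?_⟩
  obtain ⟨s, hs, hsL⟩ := exists_mem_conj_mem_of_sup_eq_top hLS hx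
  have hsS : s * (t * c) * s⁻¹ ∈ S := mul_mem (mul_mem hs (mul_mem htS (hCS hc))) (inv_mem hs)
  have hsC : s * c * s⁻¹ ∈ C := (mem_normalizer_iff.mp (hSC hs) c).mp hc
  apply ht s hs
  rw [show s * t * s⁻¹ = s * (t * c) * s⁻¹ * (s * c * s⁻¹)⁻¹ by group]
  exact mul_mem (mem_sup_left ⟨hsL, hsS⟩) (inv_mem (mem_sup_right hsC))

theorem exists_mem_forall_conj_notMem_of_sup_eq_top [Finite G] {L S : Subgroup G} [S.Normal]
    (hLS : L ⊔ S = ⊤) (hSL : ¬ S ≤ L) : ∃ t ∈ S, ∀ x : G, x * t * x⁻¹ ∉ L := by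
  obtain ⟨t, htS, ht⟩ := exists_mem_forall_conj_mul_notMem (C := ⊥) hLS bot_le
    le_normalizer_of_normal (by simpa using hSL)
  exact ⟨t, htS, fun x => by simpa using ht 1 (one_mem _) x⟩

theorem conj_mem_centralizer {H : Subgroup G} {g c : G} (hg : g ∈ normalizer (H : Set G))
    (hc : c ∈ centralizer (H : Set G)) : g * c * g⁻¹ ∈ centralizer (H : Set G) := by
  rw [mem_centralizer_iff] at hc ⊢
  intro h hh
  have := hc (g⁻¹ * h * g) ((mem_normalizer_iff''.mp hg h).mp hh)
  calc h * (g * c * g⁻¹) = g * ((g⁻¹ * h * g) * c) * g⁻¹ := by group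
    _ = g * (c * (g⁻¹ * h * g)) * g⁻¹ := by rw [this]
    _ = g * c * g⁻¹ * h := by group

theorem normalizer_le_normalizer_centralizer (H : Subgroup G) :
    normalizer (H : Set G) ≤ normalizer (centralizer (H : Set G) : Set G) := fun g hg =>
  mem_normalizer_iff.mpr fun c => ⟨conj_mem_centralizer hg, fun hc => by
    simpa [mul_assoc] using conj_mem_centralizer (inv_mem hg) hc⟩

theorem map_mk'_ne_top {H N : Subgroup G} [N.Normal] (hNH : N ≤ H) (hH : H ≠ ⊤) :
    H.map (QuotientGroup.mk' N) ≠ ⊤ := by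
  intro h
  have hcomap := comap_map_eq (QuotientGroup.mk' N) H
  rw [h, comap_top, QuotientGroup.ker_mk', sup_eq_left.mpr hNH] at hcomap
  exact hH hcomap.symm

end Subgroup

theorem IsCoatom.sup_eq_top_of_not_le {H S : Subgroup G} (hH : IsCoatom H) (h : ¬ S ≤ H) :
    H ⊔ S = ⊤ :=
  hH.lt_iff.mp (left_lt_sup.mpr h)

def IsMinimalNormalIn (S T : Subgroup G) : Prop :=
  Minimal (fun V : Subgroup G => V ≠ ⊥ ∧ V ≤ S ∧ S ≤ normalizer (V : Set G)) T

theorem exists_isMinimalNormalIn_le [Finite G] {S W : Subgroup G} (hW : W ≠ ⊥) (hWS : W ≤ S)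
    (hSW : S ≤ normalizer (W : Set G)) : ∃ T ≤ W, IsMinimalNormalIn S T :=
  exists_minimal_le_of_wellFoundedLT _ W ⟨hW, hWS, hSW⟩

namespace IsMinimalNormalIn

variable {S T : Subgroup G}

theorem ne_bot (hT : IsMinimalNormalIn S T) : T ≠ ⊥ := hT.1.1

theorem le (hT : IsMinimalNormalIn S T) : T ≤ S := hT.1.2.1

theorem le_normalizer (hT : IsMinimalNormalIn S T) : S ≤ normalizer (T : Set G) := hT.1.2.2

theorem eq_of_le (hT : IsMinimalNormalIn S T) {V : Subgroup G} (hV : V ≠ ⊥)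
    (hSV : S ≤ normalizer (V : Set G)) (hVT : V ≤ T) : V = T :=
  Minimal.eq_of_le hT ⟨hV, hVT.trans hT.le, hSV⟩ hVT

theorem map_mulEquiv (hT : IsMinimalNormalIn S T) (e : G ≃* G) (hS : S.map e.toMonoidHom = S) :
    IsMinimalNormalIn S (T.map e.toMonoidHom) := by
  have hmap (f : G ≃* G) (hf : S.map f.toMonoidHom = S) {V : Subgroup G}
      (hV : V ≠ ⊥ ∧ V ≤ S ∧ S ≤ normalizer (V : Set G)) :
      V.map f.toMonoidHom ≠ ⊥ ∧ V.map f.toMonoidHom ≤ S ∧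
        S ≤ normalizer (V.map f.toMonoidHom : Set G) := by
    refine ⟨(map_eq_bot_iff_of_injective V f.injective).not.mpr hV.1, hf ▸ map_mono hV.2.1, ?_⟩
    rw [← map_equiv_normalizer_eq]
    exact hf ▸ map_mono hV.2.2
  have hS' : S.map e.symm.toMonoidHom = S := by
    conv_lhs => rw [← hS]
    exact e.mapSubgroup.symm_apply_apply S
  refine ⟨hmap e hS hT.prop, fun V hV hVT => ?_⟩
  have hle : V.map e.symm.toMonoidHom ≤ T := e.mapSubgroup.symm_apply_le.mpr hVT
  exact e.mapSubgroup.le_symm_apply.mp (hT.2 (hmap e.symm hS' hV) hle)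

theorem map_conj [S.Normal] (hT : IsMinimalNormalIn S T) (g : G) :
    IsMinimalNormalIn S (T.map (MulAut.conj g).toMonoidHom) :=
  hT.map_mulEquiv _ (mem_normalizer_iff_map_conj_eq.mp (le_normalizer_of_normal (mem_top g)))

theorem eq_or_le_centralizer {T' : Subgroup G} (hT : IsMinimalNormalIn S T)
    (hT' : IsMinimalNormalIn S T') : T = T' ∨ T ≤ centralizer (T' : Set G) := by
  by_cases h : T ⊓ T' = ⊥
  · refine Or.inr fun a ha => mem_centralizer_iff.mpr fun b hb => ?_
    have hbab : b * a * b⁻¹ ∈ T := (mem_normalizer_iff.mp (hT.le_normalizer (hT'.le hb)) a).mp ha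
    have habb : a * b⁻¹ * a⁻¹ ∈ T' :=
      (mem_normalizer_iff.mp (hT'.le_normalizer (hT.le ha)) _).mp (inv_mem hb)
    have hcomm : b * a * b⁻¹ * a⁻¹ ∈ T ⊓ T' := by
      refine mem_inf.mpr ⟨mul_mem hbab (inv_mem ha), ?_⟩
      rw [show b * a * b⁻¹ * a⁻¹ = b * (a * b⁻¹ * a⁻¹) by group]
      exact mul_mem hb habb
    rw [h, mem_bot] at hcomm
    calc b * a = b * a * b⁻¹ * a⁻¹ * (a * b) := by group
      _ = a * b := by rw [hcomm, one_mul]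
  · have hnorm : S ≤ normalizer ((T ⊓ T' : Subgroup G) : Set G) :=
      (le_inf hT.le_normalizer hT'.le_normalizer).trans inf_normalizer_le_normalizer_inf
    exact Or.inl ((hT.eq_of_le h hnorm inf_le_left).symm.trans (hT'.eq_of_le h hnorm inf_le_right))

theorem le_normalizer_centralizer_inf (hT : IsMinimalNormalIn S T) :
    S ≤ normalizer ((centralizer (T : Set G) ⊓ S : Subgroup G) : Set G) :=
  (le_inf (hT.le_normalizer.trans (normalizer_le_normalizer_centralizer T)) S.le_normalizer).trans
    inf_normalizer_le_normalizer_inf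

end IsMinimalNormalIn

namespace IsMinimalNormal

variable {S T L : Subgroup G}

theorem normalClosure_eq (hS : IsMinimalNormal S) (hTS : T ≤ S) (hT : T ≠ ⊥) :
    normalClosure (T : Set G) = S :=
  have := hS.1
  hS.2.2 _ normalClosure_normal (ne_bot_of_le_ne_bot hT subset_normalClosure)
    (normalClosure_le_normal hTS)

theorem le_sup_centralizer (hS : IsMinimalNormal S) (hT : IsMinimalNormalIn S T) :
    S ≤ T ⊔ centralizer (T : Set G) := by
  have := hS.1
  rw [← hS.normalClosure_eq hT.le hT.ne_bot, normalClosure, closure_le]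
  intro y hy
  obtain ⟨t, ht, hty⟩ := Group.mem_conjugatesOfSet_iff.mp hy
  obtain ⟨x, rfl⟩ := isConj_iff.mp hty
  have hxt : x * t * x⁻¹ ∈ T.map (MulAut.conj x).toMonoidHom := ⟨t, ht, by simp⟩
  rcases (hT.map_conj x).eq_or_le_centralizer hT with h | h
  · exact mem_sup_left (h ▸ hxt)
  · exact mem_sup_right (h hxt)

theorem exists_mem_mul_eq (hS : IsMinimalNormal S) (hT : IsMinimalNormalIn S T) {s : G}
    (hs : s ∈ S) : ∃ a ∈ T, ∃ c ∈ centralizer (T : Set G) ⊓ S, a * c = s := by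
  have hs' : s ∈ ((T ⊔ centralizer (T : Set G) : Subgroup G) : Set G) :=
    hS.le_sup_centralizer hT hs
  rw [coe_mul_of_right_le_normalizer_left _ _ (centralizer_le_normalizer _)] at hs'
  obtain ⟨a, ha, c, hc, rfl⟩ := hs'
  exact ⟨a, ha, c, mem_inf.mpr ⟨hc, (mul_mem_cancel_left (hT.le ha)).mp hs⟩, rfl⟩

theorem centralizer_inf_ne_bot (hS : IsMinimalNormal S) (hT : IsMinimalNormalIn S T)
    (hTS : T ≠ S) : centralizer (T : Set G) ⊓ S ≠ ⊥ := by
  intro h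
  refine hTS (le_antisymm hT.le fun s hs => ?_)
  obtain ⟨a, ha, c, hc, rfl⟩ := hS.exists_mem_mul_eq hT hs
  rw [h, mem_bot] at hc
  simpa [hc] using ha

theorem inf_eq_bot_of_le_centralizer {M : Subgroup G} (hS : IsMinimalNormal S)
    (hLM : L ⊔ M = ⊤) (hM : M ≤ centralizer (S : Set G)) (hSL : ¬ S ≤ L) : L ⊓ S = ⊥ := by
  have := hS.1
  by_contra hne
  have hnorm : (L ⊓ S).Normal := by
    refine normalizer_eq_top_iff.mp (top_le_iff.mp (hLM ▸ sup_le ?_ ?_))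
    · exact (le_inf L.le_normalizer le_normalizer_of_normal).trans inf_normalizer_le_normalizer_inf
    · exact hM.trans ((centralizer_le inf_le_right).trans (centralizer_le_normalizer _))
  exact hSL ((hS.2.2 _ hnorm hne inf_le_right) ▸ inf_le_left)

theorem le_of_sup_eq_top_of_le (hS : IsMinimalNormal S) (hLS : L ⊔ S = ⊤)
    (hT : IsMinimalNormalIn S T) (hTL : T ≤ L) : S ≤ L := by
  have := hS.1
  have hcore : T ≤ L.normalCore := fun t ht g => by
    obtain ⟨l, hl, s, hs, rfl⟩ := exists_mem_mul_eq_of_sup_eq_top hLS g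
    have hst : s * t * s⁻¹ ∈ L := hTL ((mem_normalizer_iff.mp (hT.le_normalizer hs) t).mp ht)
    rw [show l * s * t * (l * s)⁻¹ = l * (s * t * s⁻¹) * l⁻¹ by group]
    exact mul_mem (mul_mem hl hst) (inv_mem hl)
  rw [← hS.normalClosure_eq hT.le hT.ne_bot]
  exact (normalClosure_le_normal hcore).trans (normalCore_le L)

theorem inf_eq_bot_or_exists_forall_conj_mul_notMem [Finite G] (hS : IsMinimalNormal S)
    (hLS : L ⊔ S = ⊤) (hSL : ¬ S ≤ L) (hT : IsMinimalNormalIn S T) :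
    L ⊓ T = ⊥ ∨
      ∃ a ∈ T, ∀ c ∈ centralizer (T : Set G) ⊓ S, ∀ x : G, x * (a * c) * x⁻¹ ∉ L := by
  have := hS.1
  by_cases h : S ≤ (L ⊓ S) ⊔ (centralizer (T : Set G) ⊓ S)
  · left
    by_contra hne
    have hnorm : S ≤ normalizer ((L ⊓ T : Subgroup G) : Set G) := by
      refine h.trans (sup_le ?_ ?_)
      · exact (inf_le_inf le_normalizer hT.le_normalizer).trans inf_normalizer_le_normalizer_inf
      · exact inf_le_left.trans ((centralizer_le inf_le_right).trans (centralizer_le_normalizer _))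
    have hTL : T ≤ L := (hT.eq_of_le hne hnorm inf_le_right) ▸ inf_le_left
    exact hSL (hS.le_of_sup_eq_top_of_le hLS hT hTL)
  · right
    obtain ⟨t, htS, ht⟩ :=
      exists_mem_forall_conj_mul_notMem hLS inf_le_right hT.le_normalizer_centralizer_inf h
    obtain ⟨a, ha, c₀, hc₀, rfl⟩ := hS.exists_mem_mul_eq hT htS
    refine ⟨a, ha, fun c hc x => ?_⟩
    simpa [mul_assoc] using ht (c₀⁻¹ * c) (mul_mem (inv_mem hc₀) hc) x

theorem exists_ne_one_forall_conj_notMem [Finite G] (hS : IsMinimalNormal S)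
    (hLS : L ⊔ S = ⊤) (hSL : ¬ S ≤ L) (hT : IsMinimalNormalIn S T) :
    ∃ a ∈ T, a ≠ 1 ∧ ∀ x : G, x * a * x⁻¹ ∉ L := by
  have := hS.1
  rcases hS.inf_eq_bot_or_exists_forall_conj_mul_notMem hLS hSL hT with h | ⟨a, ha, hL⟩
  · obtain ⟨a, ha, ha1⟩ := T.bot_or_exists_ne_one.resolve_left hT.ne_bot
    refine ⟨a, ha, ha1, fun x hx => ha1 ?_⟩
    obtain ⟨s, hs, hsa⟩ := exists_mem_conj_mem_of_sup_eq_top hLS hx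
    have hsaT : s * a * s⁻¹ ∈ T := (mem_normalizer_iff.mp (hT.le_normalizer hs) a).mp ha
    have hsa' : s * a * s⁻¹ ∈ L ⊓ T := mem_inf.mpr ⟨hsa, hsaT⟩
    rwa [h, mem_bot, conj_eq_one_iff] at hsa'
  · refine ⟨a, ha, ?_, fun x => by simpa using hL 1 (one_mem _) x⟩
    rintro rfl
    exact hL 1 (one_mem _) 1 (by simp [one_mem])

end IsMinimalNormal

theorem exists_isMinimalNormal_not_le {H : Subgroup G} (h : ¬ socle G ≤ H) :
    ∃ N, IsMinimalNormal N ∧ ¬ N ≤ H := by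
  by_contra! hN
  exact h (sSup_le hN)

def ConjugatesCover (H K : Subgroup G) : Prop :=
  ∀ g : G, (∃ x : G, x * g * x⁻¹ ∈ H) ∨ (∃ x : G, x * g * x⁻¹ ∈ K)

namespace ConjugatesCover

variable {H K : Subgroup G}

theorem symm (h : ConjugatesCover H K) : ConjugatesCover K H := fun g => (h g).symm

theorem map {Q : Type*} [Group Q] (h : ConjugatesCover H K) (f : G →* Q)
    (hf : Function.Surjective f) : ConjugatesCover (H.map f) (K.map f) := by
  intro q
  obtain ⟨g, rfl⟩ := hf q
  refine (h g).imp (fun ⟨x, hx⟩ => ⟨f x, ?_⟩) (fun ⟨x, hx⟩ => ⟨f x, ?_⟩) <;>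
    simpa using mem_map_of_mem f hx

theorem normalCoveringNumber_le_two (h : ConjugatesCover H K) (hH : H ≠ ⊤) (hK : K ≠ ⊤) :
    normalCoveringNumber G ≤ 2 := by
  refine sInf_le ⟨2, rfl, ![H, K], fun i => by fin_cases i <;> assumption, fun g => ?_⟩
  rcases h g with ⟨x, hx⟩ | ⟨x, hx⟩
  · exact ⟨0, x, hx⟩
  · exact ⟨1, x, hx⟩

theorem inf_ne_bot [Finite G] {S : Subgroup G} [hS : S.Normal] (h : ConjugatesCover H K)
    (hHS : H ⊔ S = ⊤) (hSH : ¬ S ≤ H) : K ⊓ S ≠ ⊥ := by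
  intro hKS
  obtain ⟨t, htS, ht⟩ := exists_mem_forall_conj_notMem_of_sup_eq_top hHS hSH
  rcases h t with ⟨x, hx⟩ | ⟨x, hx⟩
  · exact ht x hx
  · have hxt : x * t * x⁻¹ ∈ K ⊓ S := mem_inf.mpr ⟨hx, hS.conj_mem t htS x⟩
    rw [hKS, mem_bot, conj_eq_one_iff] at hxt
    exact ht 1 (by simp [hxt, one_mem])

theorem exists_isMinimalNormal_not_le_not_le [Finite G] (h : ConjugatesCover H K)
    (hH : IsCoatom H) (hK : IsCoatom K) {N M : Subgroup G} (hN : IsMinimalNormal N)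
    (hNH : ¬ N ≤ H) (hM : IsMinimalNormal M) (hMK : ¬ M ≤ K) :
    ∃ S, IsMinimalNormal S ∧ ¬ S ≤ H ∧ ¬ S ≤ K := by
  by_cases hNK : N ≤ K
  swap; · exact ⟨N, hN, hNH, hNK⟩
  by_cases hMH : M ≤ H
  swap; · exact ⟨M, hM, hMH, hMK⟩
  have := hN.1
  have := hM.1
  obtain ⟨n, hnN, hn⟩ :=
    exists_mem_forall_conj_notMem_of_sup_eq_top (hH.sup_eq_top_of_not_le hNH) hNH
  obtain ⟨m, hmM, hm⟩ :=
    exists_mem_forall_conj_notMem_of_sup_eq_top (hK.sup_eq_top_of_not_le hMK) hMK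
  rcases h (n * m) with ⟨x, hx⟩ | ⟨x, hx⟩
  · refine absurd ?_ (hn x)
    rw [show x * n * x⁻¹ = x * (n * m) * x⁻¹ * (x * m * x⁻¹)⁻¹ by group]
    exact mul_mem hx (inv_mem (hMH (hM.1.conj_mem m hmM x)))
  · refine absurd ?_ (hm x)
    rw [show x * m * x⁻¹ = (x * n * x⁻¹)⁻¹ * (x * (n * m) * x⁻¹) by group]
    exact mul_mem (inv_mem (hNK (hN.1.conj_mem n hnN x))) hx

end ConjugatesCover

namespace IsMinimalNormal

variable {S H K : Subgroup G}

theorem inf_ne_bot_of_conjugatesCover [Finite G] (hS : IsMinimalNormal S)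
    (hcover : ConjugatesCover H K) (hHS : H ⊔ S = ⊤) (hKS : K ⊔ S = ⊤) (hSK : ¬ S ≤ K)
    {T : Subgroup G} (hT : IsMinimalNormalIn S T) : H ⊓ T ≠ ⊥ := by
  have := hS.1
  intro hHT
  obtain ⟨a, ha, ha1, hK⟩ := hS.exists_ne_one_forall_conj_notMem hKS hSK hT
  rcases hcover a with ⟨x, hx⟩ | ⟨x, hx⟩
  · obtain ⟨s, hs, hsa⟩ := exists_mem_conj_mem_of_sup_eq_top hHS hx
    have hsaT : s * a * s⁻¹ ∈ T := (mem_normalizer_iff.mp (hT.le_normalizer hs) a).mp ha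
    have hsa' : s * a * s⁻¹ ∈ H ⊓ T := mem_inf.mpr ⟨hsa, hsaT⟩
    rw [hHT, mem_bot, conj_eq_one_iff] at hsa'
    exact ha1 hsa'
  · exact hK x hx

theorem isMinimalNormalIn_eq_of_conjugatesCover [Finite G] (hS : IsMinimalNormal S)
    (hcover : ConjugatesCover H K) (hHS : H ⊔ S = ⊤) (hSH : ¬ S ≤ H) (hKS : K ⊔ S = ⊤)
    (hSK : ¬ S ≤ K) {T : Subgroup G} (hT : IsMinimalNormalIn S T) : T = S := by
  by_contra hTS
  obtain ⟨T', hT'C, hT'⟩ := exists_isMinimalNormalIn_le (hS.centralizer_inf_ne_bot hT hTS)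
    inf_le_right hT.le_normalizer_centralizer_inf
  have hTC' : T ≤ centralizer (T' : Set G) ⊓ S :=
    le_inf (le_centralizer_iff.mp (hT'C.trans inf_le_left)) hT.le
  obtain ⟨a, ha, hHa⟩ := (hS.inf_eq_bot_or_exists_forall_conj_mul_notMem hHS hSH hT).resolve_left
    (hS.inf_ne_bot_of_conjugatesCover hcover hHS hKS hSK hT)
  obtain ⟨b, hb, hKb⟩ := (hS.inf_eq_bot_or_exists_forall_conj_mul_notMem hKS hSK hT').resolve_left
    (hS.inf_ne_bot_of_conjugatesCover hcover.symm hKS hHS hSH hT')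
  have hab : a * b = b * a := mem_centralizer_iff.mp (hT'C hb).1 a ha
  rcases hcover (a * b) with ⟨x, hx⟩ | ⟨x, hx⟩
  · exact hHa b (hT'C hb) x hx
  · exact hKb a (hTC' ha) x (hab ▸ hx)

theorem isSimpleGroup_of_conjugatesCover [Finite G] (hS : IsMinimalNormal S)
    (hcover : ConjugatesCover H K) (hHS : H ⊔ S = ⊤) (hSH : ¬ S ≤ H) (hKS : K ⊔ S = ⊤)
    (hSK : ¬ S ≤ K) : IsSimpleGroup S := by
  have : Nontrivial S := (nontrivial_iff_ne_bot S).mpr hS.2.1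
  refine ⟨fun N hN => or_iff_not_imp_left.mpr fun hN1 => ?_⟩
  have hW : N.map S.subtype ≠ ⊥ := (map_eq_bot_iff_of_injective N S.subtype_injective).not.mpr hN1
  have hNS : (N.map S.subtype).subgroupOf S = N := by
    rw [← comap_subtype, comap_map_eq_self_of_injective S.subtype_injective]
  have hSW : S ≤ normalizer (N.map S.subtype : Set G) := by
    rwa [← normal_subgroupOf_iff_le_normalizer (map_subtype_le N), hNS]
  obtain ⟨T, hTW, hT⟩ := exists_isMinimalNormalIn_le hW (map_subtype_le N) hSW
  have hTS := hS.isMinimalNormalIn_eq_of_conjugatesCover hcover hHS hSH hKS hSK hT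
  rw [← hNS]
  exact subgroupOf_eq_top.mpr (hTS ▸ hTW)

theorem not_commute_of_conjugatesCover [Finite G] (hS : IsMinimalNormal S)
    (hcover : ConjugatesCover H K) (hHS : H ⊔ S = ⊤) (hSH : ¬ S ≤ H) (hKS : K ⊔ S = ⊤)
    (hSK : ¬ S ≤ K) : ¬ ∀ a b : S, a * b = b * a := by
  have := hS.1
  intro hcomm
  have hSC : S ≤ centralizer (S : Set G) := fun a ha =>
    mem_centralizer_iff.mpr fun b hb => congrArg Subtype.val (hcomm ⟨b, hb⟩ ⟨a, ha⟩)
  exact hcover.inf_ne_bot hHS hSH (hS.inf_eq_bot_of_le_centralizer hKS hSC hSK)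

theorem centralizer_eq_bot_of_conjugatesCover [Finite G]
    (hq : ∀ (N : Subgroup G) [N.Normal], N ≠ ⊥ → 2 < normalCoveringNumber (G ⧸ N))
    (hS : IsMinimalNormal S) (hcover : ConjugatesCover H K) (hH : IsCoatom H) (hK : IsCoatom K)
    (hSH : ¬ S ≤ H) (hSK : ¬ S ≤ K) : centralizer (S : Set G) = ⊥ := by
  have := hS.1
  by_contra hC
  have hHS := hH.sup_eq_top_of_not_le hSH
  have hKS := hK.sup_eq_top_of_not_le hSK
  by_cases hCK : centralizer (S : Set G) ≤ K
  · by_cases hCH : centralizer (S : Set G) ≤ H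
    · refine (hq _ hC).not_ge ?_
      exact (hcover.map _ (QuotientGroup.mk'_surjective _)).normalCoveringNumber_le_two
        (map_mk'_ne_top hCH hH.1) (map_mk'_ne_top hCK hK.1)
    · exact hcover.symm.inf_ne_bot hKS hSK
        (hS.inf_eq_bot_of_le_centralizer (hH.sup_eq_top_of_not_le hCH) le_rfl hSH)
  · exact hcover.inf_ne_bot hHS hSH
      (hS.inf_eq_bot_of_le_centralizer (hK.sup_eq_top_of_not_le hCK) le_rfl hSK)

end IsMinimalNormal

end

theorem socle_le_or_almost_simple_general (G : Type*) [Group G] [Finite G]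
    (hq : ∀ (N : Subgroup G) [N.Normal], N ≠ ⊥ → 2 < normalCoveringNumber (G ⧸ N))
    (H K : Subgroup G) (hH : IsCoatom H) (hK : IsCoatom K)
    (hcover : ∀ g : G, (∃ x : G, x * g * x⁻¹ ∈ H) ∨ (∃ x : G, x * g * x⁻¹ ∈ K)) :
    socle G ≤ H ∨ socle G ≤ K ∨ IsAlmostSimpleGroup G := by
  by_cases hsH : socle G ≤ H
  · exact Or.inl hsH
  by_cases hsK : socle G ≤ K
  · exact Or.inr (Or.inl hsK)
  obtain ⟨N, hN, hNH⟩ := exists_isMinimalNormal_not_le hsH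
  obtain ⟨M, hM, hMK⟩ := exists_isMinimalNormal_not_le hsK
  obtain ⟨S, hS, hSH, hSK⟩ :=
    ConjugatesCover.exists_isMinimalNormal_not_le_not_le hcover hH hK hN hNH hM hMK
  have hHS := hH.sup_eq_top_of_not_le hSH
  have hKS := hK.sup_eq_top_of_not_le hSK
  exact Or.inr (Or.inr ⟨S, hS.1, hS.isSimpleGroup_of_conjugatesCover hcover hHS hSH hKS hSK,
    hS.not_commute_of_conjugatesCover hcover hHS hSH hKS hSK,
    hS.centralizer_eq_bot_of_conjugatesCover hq hcover hH hK hSH hSK⟩)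

/-- If `γ(G) = 2` but `γ(G/N) > 2` for every non-trivial normal subgroup `N`, and `G` is
covered by the conjugates of two maximal subgroups `H` and `K`, then either one of `H`, `K`
contains `soc(G)`, or `G` is almost simple. -/
theorem socle_le_or_almost_simple (G : Type*) [Group G] [Finite G]
    (h2 : normalCoveringNumber G = 2)
    (hq : ∀ (N : Subgroup G) [N.Normal], N ≠ ⊥ → 2 < normalCoveringNumber (G ⧸ N))
    (H K : Subgroup G) (hH : IsCoatom H) (hK : IsCoatom K)
    (hcover : ∀ g : G, (∃ x : G, x * g * x⁻¹ ∈ H) ∨ (∃ x : G, x * g * x⁻¹ ∈ K)) :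
    socle G ≤ H ∨ socle G ≤ K ∨ IsAlmostSimpleGroup G :=
  socle_le_or_almost_simple_general G hq H K hH hK hcover
end

section
/- Let H be a proper subgroup of a finite group G and let N₁, N₂ be two distinct minimal normal subgroups of G. If HN₁ = HN₂ = G, then H ∩ N₁ = H ∩ N₂ = 1. -/
open scoped Pointwise

/-!
Two distinct minimal normal subgroups intersect trivially, so `N₁` and `N₂` centralize each
other. Then `H ∩ N₁` is normalized both by `H` and by `N₂`, hence by `HN₂ = G`.
By minimality `H ∩ N₁` is trivial or all of `N₁`; in the latter case `N₁ ≤ H`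
and `G = HN₁ = H`, contradicting `H ≠ G`.
-/

namespace Subgroup

variable {G : Type*} [Group G]

theorem sup_eq_top_of_mul_eq_univ {H N : Subgroup G} (hN : N.Normal)
    (h : (H : Set G) * (N : Set G) = Set.univ) : H ⊔ N = ⊤ :=
  coe_eq_univ.mp ((mul_normal H N).trans h)

theorem disjoint_of_minimal_normal {N₁ N₂ : Subgroup G} (hN₁ : N₁.Normal) (hN₂ : N₂.Normal)
    (hN₁min : ∀ M : Subgroup G, M.Normal → M ≠ ⊥ → M ≤ N₁ → M = N₁)
    (hN₂min : ∀ M : Subgroup G, M.Normal → M ≠ ⊥ → M ≤ N₂ → M = N₂)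
    (hne : N₁ ≠ N₂) : Disjoint N₁ N₂ := by
  rw [disjoint_iff]
  by_contra hbot
  have hinf : (N₁ ⊓ N₂).Normal := inferInstance
  exact hne ((hN₁min _ hinf hbot inf_le_left).symm.trans (hN₂min _ hinf hbot inf_le_right))

theorem le_centralizer_of_disjoint {N K : Subgroup G} (hN : N.Normal) (hK : K.Normal)
    (hdisj : Disjoint N K) : K ≤ centralizer N := fun k hk n hn =>
  (commute_of_normal_of_disjoint N K hN hK hdisj n k hn hk).eq

theorem inf_normal_of_sup_le_centralizer {H N K : Subgroup G} (hN : N.Normal)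
    (hHK : H ⊔ K = ⊤) (hK : K ≤ centralizer N) : (H ⊓ N).Normal := by
  have hH : H ≤ normalizer (H ⊓ N : Subgroup G) :=
    (le_inf H.le_normalizer (le_top.trans (normalizer_eq_top_iff.mpr hN).ge)).trans
      inf_normalizer_le_normalizer_inf
  have hK' : K ≤ normalizer (H ⊓ N : Subgroup G) :=
    (hK.trans (centralizer_le inf_le_right)).trans (centralizer_le_normalizer _)
  exact normalizer_eq_top_iff.mp (top_le_iff.mp (hHK ▸ sup_le hH hK'))

theorem inf_eq_bot_of_sup_eq_top_of_minimal_normal {H N K : Subgroup G} (hH : H ≠ ⊤)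
    (hN : N.Normal) (hK : K.Normal)
    (hNmin : ∀ M : Subgroup G, M.Normal → M ≠ ⊥ → M ≤ N → M = N)
    (hdisj : Disjoint N K) (hHN : H ⊔ N = ⊤) (hHK : H ⊔ K = ⊤) : H ⊓ N = ⊥ := by
  by_contra hbot
  have hinf : H ⊓ N = N :=
    hNmin _ (inf_normal_of_sup_le_centralizer hN hHK (le_centralizer_of_disjoint hN hK hdisj))
      hbot inf_le_right
  exact hH (by rwa [sup_eq_left.mpr (inf_eq_right.mp hinf)] at hHN)

end Subgroup

theorem inf_eq_bot_of_two_minimal_normal_general (G : Type*) [Group G]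
    (H N₁ N₂ : Subgroup G) (hH : H ≠ ⊤)
    (hN₁ : N₁.Normal)
    (hN₁min : ∀ M : Subgroup G, M.Normal → M ≠ ⊥ → M ≤ N₁ → M = N₁)
    (hN₂ : N₂.Normal)
    (hN₂min : ∀ M : Subgroup G, M.Normal → M ≠ ⊥ → M ≤ N₂ → M = N₂)
    (hne : N₁ ≠ N₂)
    (h1 : (H : Set G) * (N₁ : Set G) = Set.univ)
    (h2 : (H : Set G) * (N₂ : Set G) = Set.univ) :
    H ⊓ N₁ = ⊥ ∧ H ⊓ N₂ = ⊥ := by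
  have hdisj := Subgroup.disjoint_of_minimal_normal hN₁ hN₂ hN₁min hN₂min hne
  have hHN₁ := Subgroup.sup_eq_top_of_mul_eq_univ hN₁ h1
  have hHN₂ := Subgroup.sup_eq_top_of_mul_eq_univ hN₂ h2
  exact ⟨Subgroup.inf_eq_bot_of_sup_eq_top_of_minimal_normal hH hN₁ hN₂ hN₁min hdisj hHN₁ hHN₂,
    Subgroup.inf_eq_bot_of_sup_eq_top_of_minimal_normal hH hN₂ hN₁ hN₂min hdisj.symm hHN₂ hHN₁⟩

/-- If `H` is a proper subgroup of a finite group `G`, and `N₁ ≠ N₂` are minimal normal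
subgroups of `G` with `HN₁ = HN₂ = G`, then `H ∩ N₁ = H ∩ N₂ = 1`. -/
theorem inf_eq_bot_of_two_minimal_normal (G : Type*) [Group G] [Finite G]
    (H N₁ N₂ : Subgroup G) (hH : H ≠ ⊤)
    (hN₁ : N₁.Normal) (hN₁bot : N₁ ≠ ⊥)
    (hN₁min : ∀ M : Subgroup G, M.Normal → M ≠ ⊥ → M ≤ N₁ → M = N₁)
    (hN₂ : N₂.Normal) (hN₂bot : N₂ ≠ ⊥)
    (hN₂min : ∀ M : Subgroup G, M.Normal → M ≠ ⊥ → M ≤ N₂ → M = N₂)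
    (hne : N₁ ≠ N₂)
    (h1 : (H : Set G) * (N₁ : Set G) = Set.univ)
    (h2 : (H : Set G) * (N₂ : Set G) = Set.univ) :
    H ⊓ N₁ = ⊥ ∧ H ⊓ N₂ = ⊥ :=
  inf_eq_bot_of_two_minimal_normal_general G H N₁ N₂ hH hN₁ hN₁min hN₂ hN₂min hne h1 h2
end

section
/- Let G be a finite group with γ(G) = 2 such that γ(G/N) > 2 for every non-trivial normal subgroup N of G, let M = soc(G), and suppose M is abelian. Then G is a semidirect product M ⋊ K for a maximal subgroup K acting on M, M is an irreducible K-module, and K is an almost-transitive irreducible subgroup of Aut(M). -/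
open scoped Pointwise

/-!
Enlarge the two components of a normal covering to maximal subgroups `U`, `W`. Minimality of
`γ(G)` under quotients says that every non-trivial normal subgroup `N` supplements `U` or `W`
(otherwise the images of `U`, `W` cover `G/N`). Say `U ⊔ M = ⊤` for `M = soc(G)`. Since `M` is
abelian, `U ⊓ M` and `W ⊓ M` are then normal; if `U ⊓ M ≠ 1`, minimality makes both non-trivial
with trivial intersection, so a product `d f` of non-trivial elements of them lies in no
conjugate of `U` or `W`. Hence `U` complements `M`, and every minimal normal subgroup, hence `M`,
lies in `W`.

As `G = U M` with `M` abelian, a subgroup normalised by `U` and centralised by `M` is normal.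
This gives faithfulness (a non-trivial kernel would contain a minimal normal subgroup inside
`U ⊓ M`) and irreducibility (a non-trivial `U`-invariant `N ≤ M` cannot supplement `W ⊇ M`, so
it supplements `U` and equals `M`). For almost-transitivity take `T = U ⊓ W`: if `k ∈ U`
centralises some `m ≠ 1` of `M`, the `M`-class of `k` misses some `m₀ k`, which is not conjugate
into `U` and so is conjugate into `W ⊇ M`.
-/

namespace Subgroup

variable {G : Type*} [Group G]

theorem normal_of_sup_eq_top {X A B : Subgroup G} (hXA : X ⊔ A = ⊤)
    (hX : X ≤ normalizer (B : Set G)) (hA : A ≤ centralizer (B : Set G)) : B.Normal := by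
  rw [← normalizer_eq_top_iff, eq_top_iff, ← hXA]
  exact sup_le hX (hA.trans (centralizer_le_normalizer _))

theorem le_normalizer_inf (X N : Subgroup G) [N.Normal] :
    X ≤ normalizer ((X ⊓ N : Subgroup G) : Set G) :=
  (le_inf le_normalizer le_normalizer_of_normal).trans inf_normalizer_le_normalizer_inf

theorem normal_inf_of_sup_eq_top {X A : Subgroup G} [A.Normal] (hA : A ≤ centralizer (A : Set G))
    (hXA : X ⊔ A = ⊤) : (X ⊓ A).Normal :=
  normal_of_sup_eq_top hXA (le_normalizer_inf X A) (hA.trans (centralizer_le inf_le_right))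

theorem eq_of_le_of_sup_eq_top_of_inf_eq_bot {X N M : Subgroup G} [N.Normal] (hNM : N ≤ M)
    (hXN : X ⊔ N = ⊤) (hXM : X ⊓ M = ⊥) : N = M := by
  refine le_antisymm hNM fun m hm => ?_
  have hmNX : m ∈ (N : Set G) * X := by
    rw [← normal_mul, sup_comm, hXN]
    trivial
  obtain ⟨n, hn, x, hx, rfl⟩ := hmNX
  have hxM : x ∈ M := (M.mul_mem_cancel_left (hNM hn)).mp hm
  have hx1 : x = 1 := by
    rw [← mem_bot, ← hXM]
    exact mem_inf.mpr ⟨hx, hxM⟩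
  simpa [hx1] using hn

end Subgroup

open Subgroup

section ConjCover

variable {G : Type*} [Group G]

def ConjCover (U W : Subgroup G) : Prop :=
  ∀ g : G, ∃ x : G, x * g * x⁻¹ ∈ U ∨ x * g * x⁻¹ ∈ W

namespace ConjCover

variable {U W : Subgroup G}

theorem symm (h : ConjCover U W) : ConjCover W U :=
  fun g => (h g).imp fun _ => Or.symm

theorem mono {U' W' : Subgroup G} (h : ConjCover U W) (hU : U ≤ U') (hW : W ≤ W') :
    ConjCover U' W' :=
  fun g => (h g).imp fun _ => Or.imp (@hU _) (@hW _)

theorem map {H : Type*} [Group H] (h : ConjCover U W) {f : G →* H}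
    (hf : Function.Surjective f) : ConjCover (U.map f) (W.map f) := by
  intro q
  obtain ⟨g, rfl⟩ := hf q
  obtain ⟨x, hx⟩ := h g
  refine ⟨f x, ?_⟩
  simpa only [← map_mul, ← map_inv] using hx.imp (mem_map_of_mem f) (mem_map_of_mem f)

theorem eq_bot_of_inf_eq_bot (h : ConjCover U W) {N : Subgroup G} [N.Normal]
    (hU : N ⊓ U = ⊥) (hW : N ⊓ W = ⊥) : N = ⊥ := by
  refine (eq_bot_iff_forall N).mpr fun n hn => ?_
  have hxn (x : G) : x * n * x⁻¹ ∈ N := ‹N.Normal›.conj_mem n hn x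
  obtain ⟨x, hx | hx⟩ := h n
  · rw [← conj_eq_one_iff (a := x), ← mem_bot, ← hU]
    exact mem_inf.mpr ⟨hxn x, hx⟩
  · rw [← conj_eq_one_iff (a := x), ← mem_bot, ← hW]
    exact mem_inf.mpr ⟨hxn x, hx⟩

theorem eq_bot_or_eq_bot (h : ConjCover U W) {D F : Subgroup G} [D.Normal] [F.Normal]
    (hDU : D ≤ U) (hFW : F ≤ W) (hDW : D ⊓ W = ⊥) (hFU : F ⊓ U = ⊥) : D = ⊥ ∨ F = ⊥ := by
  rcases D.bot_or_exists_ne_one with hD | ⟨d, hd, hd1⟩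
  · exact .inl hD
  rcases F.bot_or_exists_ne_one with hF | ⟨f, hf, hf1⟩
  · exact .inr hF
  have hxd (x : G) : x * d * x⁻¹ ∈ D := ‹D.Normal›.conj_mem d hd x
  have hxf (x : G) : x * f * x⁻¹ ∈ F := ‹F.Normal›.conj_mem f hf x
  have hsplit (x : G) : x * (d * f) * x⁻¹ = x * d * x⁻¹ * (x * f * x⁻¹) := by group
  obtain ⟨x, hx | hx⟩ := h (d * f) <;> rw [hsplit] at hx
  · have hxfU : x * f * x⁻¹ ∈ F ⊓ U :=
      ⟨hxf x, (U.mul_mem_cancel_left (hDU (hxd x))).mp hx⟩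
    rw [hFU, mem_bot, conj_eq_one_iff] at hxfU
    exact absurd hxfU hf1
  · have hxdW : x * d * x⁻¹ ∈ D ⊓ W :=
      ⟨hxd x, (W.mul_mem_cancel_right (hFW (hxf x))).mp hx⟩
    rw [hDW, mem_bot, conj_eq_one_iff] at hxdW
    exact absurd hxdW hd1

end ConjCover

theorem normalCoveringNumber_le_two {U W : Subgroup G} (hU : U ≠ ⊤) (hW : W ≠ ⊤)
    (h : ConjCover U W) : normalCoveringNumber G ≤ 2 := by
  refine sInf_le ⟨2, by norm_num, ![U, W], fun i => by fin_cases i <;> assumption, fun g => ?_⟩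
  obtain ⟨x, hx | hx⟩ := h g
  exacts [⟨0, x, hx⟩, ⟨1, x, hx⟩]

theorem exists_conjCover_of_normalCoveringNumber_eq_two (h : normalCoveringNumber G = 2) :
    ∃ U W : Subgroup G, U ≠ ⊤ ∧ W ≠ ⊤ ∧ ConjCover U W := by
  have hne : {n : ℕ∞ | ∃ k : ℕ, n = (k : ℕ∞) ∧ ∃ H : Fin k → Subgroup G,
      (∀ i, H i ≠ ⊤) ∧ ∀ g : G, ∃ i, ∃ x : G, x * g * x⁻¹ ∈ H i}.Nonempty := by
    by_contra hempty
    rw [Set.not_nonempty_iff_eq_empty] at hempty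
    simp [normalCoveringNumber, hempty] at h
  obtain ⟨k, hk, H, hH, hcov⟩ := csInf_mem hne
  obtain rfl : k = 2 := by exact_mod_cast hk.symm.trans h
  refine ⟨H 0, H 1, hH 0, hH 1, fun g => ?_⟩
  obtain ⟨i, x, hx⟩ := hcov g
  fin_cases i
  exacts [⟨x, .inl hx⟩, ⟨x, .inr hx⟩]

theorem ConjCover.sup_eq_top_or_sup_eq_top {U W : Subgroup G} (h : ConjCover U W)
    {N : Subgroup G} [N.Normal] (hN : 2 < normalCoveringNumber (G ⧸ N)) :
    U ⊔ N = ⊤ ∨ W ⊔ N = ⊤ := by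
  have hmap_ne_top {V : Subgroup G} (hV : V ⊔ N ≠ ⊤) : V.map (QuotientGroup.mk' N) ≠ ⊤ := by
    intro hVtop
    apply hV
    rw [← QuotientGroup.ker_mk' N, ← comap_map_eq, hVtop, comap_top]
  by_contra! hUW
  exact hN.not_ge (normalCoveringNumber_le_two (hmap_ne_top hUW.1) (hmap_ne_top hUW.2)
    (h.map (QuotientGroup.mk'_surjective N)))

end ConjCover

section Socle

variable {G : Type*} [Group G]

instance socle_normal : (socle G).Normal :=
  sSup_normal _ fun _ hN => hN.1

theorem exists_isMinimalNormal_le [Finite G] {N : Subgroup G} [N.Normal] (hN : N ≠ ⊥) :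
    ∃ A, IsMinimalNormal A ∧ A ≤ N := by
  obtain ⟨A, hAN, ⟨hAn, hAb⟩, hAmin⟩ :=
    exists_minimal_le_of_wellFoundedLT (fun A : Subgroup G => A.Normal ∧ A ≠ ⊥) N ⟨‹_›, hN⟩
  exact ⟨A, ⟨hAn, hAb, fun B hBn hBb hBA => le_antisymm hBA (hAmin ⟨hBn, hBb⟩ hBA)⟩, hAN⟩

theorem eq_bot_of_inf_socle_eq_bot [Finite G] {N : Subgroup G} [N.Normal]
    (h : N ⊓ socle G = ⊥) : N = ⊥ := by
  by_contra hN
  obtain ⟨A, hA, hAN⟩ := exists_isMinimalNormal_le hN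
  exact hA.2.1 (eq_bot_iff.mpr (h ▸ le_inf hAN (le_sSup hA)))

theorem socle_ne_bot [Finite G] [Nontrivial G] : socle G ≠ ⊥ := fun h =>
  top_ne_bot (eq_bot_of_inf_socle_eq_bot (N := ⊤) (by rw [h, inf_bot_eq]))

end Socle

theorem Subgroup.exists_not_conj_mul_of_commute {G : Type*} [Group G] {M : Subgroup G} [Finite M]
    {k : G} (hk : k ∈ normalizer (M : Set G)) {m : G} (hm : m ∈ M) (hm1 : m ≠ 1)
    (hkm : k * m = m * k) : ∃ m₀ ∈ M, ∀ x ∈ M, x * (m₀ * k) * x⁻¹ ≠ k := by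
  let f : M → M := fun x => ⟨x⁻¹ * (k * x * k⁻¹),
    M.mul_mem (M.inv_mem x.2) ((mem_normalizer_iff.mp hk x).mp x.2)⟩
  -- `f` identifies `1` and `m`, so by finiteness it misses some `m₀`
  have hf : ¬ Function.Injective f := fun hinj =>
    hm1 (congrArg Subtype.val (hinj (a₁ := ⟨m, hm⟩) (a₂ := 1) (by ext; simp [f, hkm])))
  obtain ⟨m₀, hm₀⟩ := not_forall.mp (mt Finite.injective_iff_surjective.mpr hf)
  refine ⟨m₀, m₀.2, fun x hx hconj => hm₀ ⟨⟨x, hx⟩, ?_⟩⟩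
  ext
  calc x⁻¹ * (k * x * k⁻¹) = x⁻¹ * (x * (m₀ * k) * x⁻¹ * x * k⁻¹) := by rw [hconj]
    _ = m₀ := by group

section TwoCover

variable {G : Type*} [Group G] {U W M : Subgroup G}

theorem ConjCover.inf_eq_bot_of_sup_eq_top (hcov : ConjCover U W) (hU : U ≠ ⊤) (hW : W ≠ ⊤)
    (hmin : ∀ N : Subgroup G, N.Normal → N ≠ ⊥ → U ⊔ N = ⊤ ∨ W ⊔ N = ⊤)
    [M.Normal] (hM : M ≤ centralizer (M : Set G)) (hsup : U ⊔ M = ⊤) : U ⊓ M = ⊥ := by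
  by_contra hD
  have : (U ⊓ M).Normal := normal_inf_of_sup_eq_top hM hsup
  have hWD : W ⊔ (U ⊓ M) = ⊤ :=
    (hmin _ this hD).resolve_left (by rwa [sup_eq_left.mpr inf_le_left])
  have hE : W ⊓ (U ⊓ M) = ⊥ := by
    by_contra hE
    have hD_ab : U ⊓ M ≤ centralizer ((U ⊓ M : Subgroup G) : Set G) :=
      inf_le_right.trans (hM.trans (centralizer_le inf_le_right))
    rcases hmin _ (normal_inf_of_sup_eq_top hD_ab hWD) hE with h | h
    · exact hU (by rwa [sup_eq_left.mpr (inf_le_right.trans inf_le_left)] at h)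
    · exact hW (by rwa [sup_eq_left.mpr inf_le_left] at h)
  have hWM : W ⊔ M = ⊤ := top_le_iff.mp (hWD ▸ sup_le_sup_left inf_le_right W)
  have : (W ⊓ M).Normal := normal_inf_of_sup_eq_top hM hWM
  have hF : W ⊓ M ≠ ⊥ := fun hF => by
    have hDM := eq_of_le_of_sup_eq_top_of_inf_eq_bot inf_le_right hWD hF
    exact hU (by rwa [sup_eq_left.mpr (hDM ▸ inf_le_left : M ≤ U)] at hsup)
  refine hF ((hcov.eq_bot_or_eq_bot inf_le_left inf_le_left ?_ ?_).resolve_left hD)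
  · rwa [inf_comm]
  · rwa [inf_assoc, inf_comm M]

theorem ConjCover.socle_le_of_inf_socle_eq_bot [Finite G] (hcov : ConjCover U W) (hW : IsCoatom W)
    (hM : socle G ≤ centralizer (socle G : Set G)) (hinf : U ⊓ socle G = ⊥) : socle G ≤ W := by
  refine sSup_le fun A hA => ?_
  by_contra hAW
  have hAM : A ≤ socle G := le_sSup hA
  have := hA.1
  have : (W ⊓ A).Normal := normal_inf_of_sup_eq_top (hAM.trans (hM.trans (centralizer_le hAM)))
    (codisjoint_iff.mp (hW.not_le_iff_codisjoint.mp hAW))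
  have hAW' : A ⊓ W = ⊥ := by
    rw [inf_comm]
    by_contra h
    exact hAW ((hA.2.2 _ this h inf_le_right).ge.trans inf_le_left)
  have hAU : A ⊓ U = ⊥ := eq_bot_iff.mpr (hinf ▸ le_inf inf_le_right (inf_le_left.trans hAM))
  exact hA.2.1 (hcov.eq_bot_of_inf_eq_bot hAU hAW')

theorem inf_centralizer_socle_eq_bot [Finite G] (hsup : U ⊔ socle G = ⊤) (hinf : U ⊓ socle G = ⊥) :
    U ⊓ centralizer (socle G : Set G) = ⊥ := by
  have : (U ⊓ centralizer (socle G : Set G)).Normal :=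
    normal_of_sup_eq_top hsup (le_normalizer_inf _ _) (le_centralizer_iff.mp inf_le_right)
  exact eq_bot_of_inf_socle_eq_bot (eq_bot_iff.mpr (hinf ▸ inf_le_inf_right _ inf_le_left))

theorem eq_bot_or_eq_of_le_normalizer (hW : W ≠ ⊤)
    (hmin : ∀ N : Subgroup G, N.Normal → N ≠ ⊥ → U ⊔ N = ⊤ ∨ W ⊔ N = ⊤)
    (hM : M ≤ centralizer (M : Set G)) (hsup : U ⊔ M = ⊤) (hinf : U ⊓ M = ⊥) (hMW : M ≤ W)
    {N : Subgroup G} (hNM : N ≤ M) (hUN : U ≤ normalizer (N : Set G)) : N = ⊥ ∨ N = M := by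
  have : N.Normal := normal_of_sup_eq_top hsup hUN (hM.trans (centralizer_le hNM))
  refine or_iff_not_imp_left.mpr fun hN => ?_
  rcases hmin N this hN with h | h
  · exact eq_of_le_of_sup_eq_top_of_inf_eq_bot hNM h hinf
  · exact absurd (by rwa [sup_eq_left.mpr (hNM.trans hMW)] at h) hW

theorem ConjCover.exists_conj_mem_inf [Finite G] (hcov : ConjCover U W) [M.Normal]
    (hsup : U ⊔ M = ⊤) (hinf : U ⊓ M = ⊥) (hMW : M ≤ W) {k : G} (hk : k ∈ U)
    (hfix : ∃ m ∈ M, m ≠ 1 ∧ k * m = m * k) : ∃ x ∈ U, x * k * x⁻¹ ∈ U ⊓ W := by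
  obtain ⟨m, hm, hm1, hkm⟩ := hfix
  obtain ⟨m₀, hm₀M, hm₀⟩ :=
    exists_not_conj_mul_of_commute (normalizer_eq_top (H := M) ▸ mem_top k) hm hm1 hkm
  -- `U` meets the coset `M k` only in `k`, while `W ⊇ M` contains all of `M k` or none of it
  obtain ⟨x, hx⟩ := hcov (m₀ * k)
  have hxUM : x ∈ (U : Set G) * M := by
    rw [← mul_normal, hsup]
    trivial
  obtain ⟨u, hu, m', hm', rfl⟩ := hxUM
  set y := m' * (m₀ * k) * m'⁻¹
  have hky : k * y⁻¹ ∈ M := by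
    have e : k * y⁻¹ = k * m' * k⁻¹ * m₀⁻¹ * m'⁻¹ := by simp only [y]; group
    rw [e]
    exact M.mul_mem (M.mul_mem (‹M.Normal›.conj_mem _ hm' k) (M.inv_mem hm₀M)) (M.inv_mem hm')
  have hconj : u * m' * (m₀ * k) * (u * m')⁻¹ = u * y * u⁻¹ := by simp only [y]; group
  rw [hconj] at hx
  refine ⟨u, hu, U.mul_mem (U.mul_mem hu hk) (U.inv_mem hu), ?_⟩
  rcases hx with hx | hx
  · have hyU : y ∈ U :=
      (U.mul_mem_cancel_left hu).mp ((U.mul_mem_cancel_right (U.inv_mem hu)).mp hx)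
    have hky' : k * y⁻¹ ∈ U ⊓ M := ⟨U.mul_mem hk (U.inv_mem hyU), hky⟩
    rw [hinf, mem_bot, mul_inv_eq_one] at hky'
    exact absurd hky'.symm (hm₀ m' hm')
  · have hsplit : u * k * u⁻¹ = u * (k * y⁻¹) * u⁻¹ * (u * y * u⁻¹) := by group
    rw [hsplit]
    exact W.mul_mem (hMW (‹M.Normal›.conj_mem _ hky u)) hx

end TwoCover

/-- If `γ(G) = 2`, `γ(G/N) > 2` for every non-trivial normal subgroup `N`, and
`M = soc(G)` is abelian, then `G = M ⋊ K` for a maximal subgroup `K`, `M` is an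
irreducible `K`-module (under the faithful conjugation action of `K` on `M`, i.e. `K` is a
subgroup of `Aut(M)`), and `K` is almost-transitive: there is a proper subgroup `T` of `K`
containing, up to `K`-conjugacy, every `k ∈ K` with `C_M(k) ≠ 1`. -/
theorem abelian_socle_case (G : Type*) [Group G] [Finite G]
    (h2 : normalCoveringNumber G = 2)
    (hq : ∀ (N : Subgroup G) [N.Normal], N ≠ ⊥ → 2 < normalCoveringNumber (G ⧸ N))
    (hab : ∀ a b : G, a ∈ socle G → b ∈ socle G → a * b = b * a) :
    ∃ K : Subgroup G, IsCoatom K ∧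
      -- `G = M ⋊ K`
      socle G ⊓ K = ⊥ ∧ socle G ⊔ K = ⊤ ∧
      -- the conjugation action of `K` on `M` is faithful, i.e. `K ≤ Aut(M)`
      (∀ k ∈ K, (∀ m ∈ socle G, k * m = m * k) → k = 1) ∧
      -- `M` is an irreducible `K`-module
      (∀ N : Subgroup G, N ≤ socle G → (∀ k ∈ K, ∀ n ∈ N, k * n * k⁻¹ ∈ N) →
        N = ⊥ ∨ N = socle G) ∧
      -- `K` is almost-transitive
      (∃ T : Subgroup G, T ≤ K ∧ T ≠ K ∧
        ∀ k ∈ K, (∃ m ∈ socle G, m ≠ 1 ∧ k * m = m * k) → ∃ x ∈ K, x * k * x⁻¹ ∈ T) := by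
  obtain ⟨U₀, W₀, hU₀, hW₀, hcov₀⟩ := exists_conjCover_of_normalCoveringNumber_eq_two h2
  obtain ⟨U, hU, hUU₀⟩ := (eq_top_or_exists_le_coatom U₀).resolve_left hU₀
  obtain ⟨W, hW, hWW₀⟩ := (eq_top_or_exists_le_coatom W₀).resolve_left hW₀
  have hcov : ConjCover U W := hcov₀.mono hUU₀ hWW₀
  clear hcov₀ hUU₀ hWW₀
  have hmin (V X : Subgroup G) (hcov : ConjCover V X) (N : Subgroup G) (hN : N.Normal)
      (hN1 : N ≠ ⊥) : V ⊔ N = ⊤ ∨ X ⊔ N = ⊤ := hcov.sup_eq_top_or_sup_eq_top (hq N hN1)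
  have hM : socle G ≤ centralizer (socle G : Set G) := fun a ha =>
    mem_centralizer_iff.mpr fun b hb => hab b a hb ha
  have : Nontrivial G := nontrivial_iff.mp (nontrivial_of_lt _ _ hU.lt_top)
  wlog hsup : U ⊔ socle G = ⊤ generalizing U W
  · exact this W hW U hU hcov.symm
      ((hmin U W hcov _ inferInstance socle_ne_bot).resolve_left hsup)
  have hinf := hcov.inf_eq_bot_of_sup_eq_top hU.ne_top hW.ne_top (hmin U W hcov) hM hsup
  have hMW := hcov.socle_le_of_inf_socle_eq_bot hW hM hinf
  refine ⟨U, hU, inf_comm U _ ▸ hinf, sup_comm U _ ▸ hsup, fun k hk hkM => ?_,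
    fun N hNM hUN => ?_, U ⊓ W, inf_le_left, fun hUW => ?_,
    fun k hk => hcov.exists_conj_mem_inf hsup hinf hMW hk⟩
  · rw [← mem_bot, ← inf_centralizer_socle_eq_bot hsup hinf]
    exact ⟨hk, mem_centralizer_iff.mpr fun m hm => (hkM m hm).symm⟩
  · exact eq_bot_or_eq_of_le_normalizer hW.ne_top (hmin U W hcov) hM hsup hinf hMW hNM
      fun k hk => mem_normalizer_fintype (hUN k hk)
  · exact hW.ne_top (top_le_iff.mp (hsup ▸ sup_le (inf_eq_left.mp hUW) hMW))
end

section
/- Let S be a finite non-abelian simple group, let T be a proper subgroup of S, and let h be an element of S normalizing T. Then hS ≠ ∪_{s ∈ S} (hT)^s; that is, S is not equal to the union over s ∈ S of the conjugates s⁻¹(hT)s of the coset hT. -/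
open scoped Pointwise

/-!
The coset `hT` lies in the normalizer `N` of `T`. If `N` is proper, already the conjugates of `N`
miss an element: in the transitive action of `S` on `S ⧸ N`, Burnside's lemma says that the
average number of fixed points is one, while the identity fixes at least two points, so some
element fixes none, i.e. lies in no conjugate of `N`. If `N = S`, then `T` is normal, hence
trivial, and the union is the conjugacy class of `h`, which is not all of the nontrivial group `S`.
-/

theorem MulAction.exists_fixedBy_eq_empty (G X : Type*) [Group G] [MulAction G X] [Finite G]
    [Finite X] [Nontrivial X] [IsPretransitive G X] : ∃ g : G, fixedBy X g = ∅ := by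
  classical
  have := Fintype.ofFinite G
  have := Fintype.ofFinite X
  by_contra! hfix
  obtain ⟨_⟩ := (pretransitive_iff_unique_quotient_of_nonempty G X).mp ‹_›
  have hburnside : ∑ g : G, Fintype.card (fixedBy X g) = Fintype.card G := by
    rw [sum_card_fixedBy_eq_card_orbits_mul_card_group, Fintype.card_unique, one_mul]
  have hlt : ∑ _g : G, 1 < ∑ g : G, Fintype.card (fixedBy X g) := by
    refine Finset.sum_lt_sum (fun g _ => Fintype.card_pos_iff.mpr (hfix g).to_subtype)
      ⟨1, Finset.mem_univ _, ?_⟩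
    simpa [fixedBy_one_eq_univ] using Fintype.one_lt_card
  rw [hburnside] at hlt
  simp at hlt

theorem Subgroup.iUnion_conj_ne_univ {G : Type*} [Group G] [Finite G] {H : Subgroup G}
    (hH : H ≠ ⊤) : ⋃ s : G, (fun y => s⁻¹ * y * s) '' (H : Set G) ≠ Set.univ := by
  have : Nontrivial (G ⧸ H) := QuotientGroup.nontrivial_iff.mpr hH
  obtain ⟨g, hg⟩ := MulAction.exists_fixedBy_eq_empty G (G ⧸ H)
  intro hcov
  obtain ⟨s, y, hy, rfl⟩ := Set.mem_iUnion.mp (hcov ▸ Set.mem_univ g)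
  refine Set.eq_empty_iff_forall_notMem.mp hg (s⁻¹ : G) ?_
  show ((_ * s⁻¹ : G) : G ⧸ H) = s⁻¹
  rw [QuotientGroup.eq]
  simpa [mul_assoc] using hy

theorem iUnion_conj_singleton_ne_univ {G : Type*} [Group G] [Nontrivial G] (h : G) :
    ⋃ s : G, (fun y => s⁻¹ * y * s) '' {h} ≠ Set.univ := by
  intro hcov
  have hconj : ∀ g : G, ∃ s, s⁻¹ * h * s = g := fun g => by
    simpa using Set.eq_univ_iff_forall.mp hcov g
  obtain ⟨s, hs⟩ := hconj 1
  have h_one : h = 1 := by simpa [mul_assoc, inv_mul_eq_one] using hs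
  obtain ⟨g, hg⟩ := exists_ne (1 : G)
  obtain ⟨t, rfl⟩ := hconj g
  simp [h_one] at hg

theorem coset_conjugates_do_not_cover_general (S : Type*) [Group S] [Finite S]
    (hS : IsSimpleGroup S)
    (T : Subgroup S) (hT : T ≠ ⊤) (h : S) (hnorm : h ∈ Subgroup.normalizer (T : Set S)) :
    (⋃ s : S, (fun y => s⁻¹ * y * s) '' (h • (T : Set S))) ≠ Set.univ := by
  by_cases hN : Subgroup.normalizer (T : Set S) = ⊤
  · obtain rfl : T = ⊥ := (hS.eq_bot_or_eq_top_of_normal T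
      (Subgroup.normalizer_eq_top_iff.mp hN)).resolve_right hT
    simpa using iUnion_conj_singleton_ne_univ h
  · have hcoset : h • (T : Set S) ⊆ Subgroup.normalizer (T : Set S) := by
      rintro _ ⟨t, ht, rfl⟩
      exact Subgroup.mul_mem _ hnorm (Subgroup.le_normalizer ht)
    intro hcov
    refine Subgroup.iUnion_conj_ne_univ hN (Set.univ_subset_iff.mp ?_)
    exact hcov ▸ Set.iUnion_mono fun s => Set.image_mono hcoset

/-- If `S` is a finite non-abelian simple group, `T < S` and `h ∈ S` normalizes `T`,
then `hS ≠ ⋃_{s ∈ S} (hT)^s`, i.e. the conjugates of the coset `hT` do not cover `S`. -/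
theorem coset_conjugates_do_not_cover (S : Type*) [Group S] [Finite S]
    (hS : IsSimpleGroup S) (hSnonab : ¬ ∀ a b : S, a * b = b * a)
    (T : Subgroup S) (hT : T ≠ ⊤) (h : S) (hnorm : h ∈ Subgroup.normalizer (T : Set S)) :
    (⋃ s : S, (fun y => s⁻¹ * y * s) '' (h • (T : Set S))) ≠ Set.univ :=
  coset_conjugates_do_not_cover_general S hS T hT h hnorm
end
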